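/- arXiv:1908.00842 — 4 statements merged into one kernel-verified Lean document; each statement's English description precedes it below -/
import Mathlib

section
/- Let f : G → ZMod m be an (m,n)-generalized bent function. Then: (a) for every x ∈ G and every c ∈ ZMod m, the number of y ∈ G with f(x+y) − f(y) = c equals the number of y ∈ G with f(x+y) − f(y) = −c, and for every x ≠ 0 the number of y ∈ G with f(x+y) = f(y) is even; (b) for every x ∈ G with x ≠ 0, ∑_{y ∈ G} ζ_m^{(f(x+y) − f(y)).val} = 0. -/
/-- The primitive complex `m`-th root of unity `exp(2πi/m)`. -/
noncomputable def zetaC (m : ℕ) : ℂ := Complex.exp (2 * Real.pi * Complex.I / m)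

/-- `f : (Fin n → ZMod 2) → ZMod m` is an `(m,n)`-generalized bent function if
`|∑_x ζ_m^{f x} (-1)^{y·x}|² = 2^n` for all `y`. -/
noncomputable def IsGBF (m n : ℕ) (f : (Fin n → ZMod 2) → ZMod m) : Prop :=
  ∀ y : Fin n → ZMod 2,
    ‖(∑ x : Fin n → ZMod 2,
      zetaC m ^ (f x).val * (-1 : ℂ) ^ (∑ i : Fin n, (y i).val * (x i).val))‖ ^ 2
      = (2 : ℝ) ^ n

/-!
Both identities in (a) come from the translation `y ↦ x + y`, an involution because `x + x = 0`:
it negates `f (x + y) - f y`, and for `x ≠ 0` it has no fixed points.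

For (b), note that `ζ_m ^ a.val` and `(-1) ^ (w·u)` are the standard additive characters of
`ZMod m` and `ZMod 2`. Bentness of `f` says that `g = ζ_m ^ f` has flat power spectrum
`|ĝ|² = 2ⁿ`. By Wiener–Khinchin, the Fourier transform of `|ĝ|²` is `2ⁿ` times the
autocorrelation `y ↦ ∑ g (y + x) * conj (g y)`. The Fourier transform of a constant vanishes
away from `0`, so the autocorrelation vanishes at every `x ≠ 0`.
-/

open Finset Matrix ComplexConjugate

lemma AddChar.map_sum_eq_prod {A M ι : Type*} [AddCommMonoid A] [CommMonoid M] (ψ : AddChar A M)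
    (s : Finset ι) (f : ι → A) : ψ (∑ i ∈ s, f i) = ∏ i ∈ s, ψ (f i) := by
  induction s using Finset.cons_induction with
  | empty => simp
  | cons a s ha ih => rw [sum_cons, prod_cons, AddChar.map_add_eq_mul, ih]

lemma Finset.even_card_of_involution {α : Type*} {s : Finset α} (σ : α → α)
    (hσ_mem : ∀ a ∈ s, σ a ∈ s) (hσ_invol : ∀ a ∈ s, σ (σ a) = a) (hσ_ne : ∀ a ∈ s, σ a ≠ a) :
    Even #s := by
  have h : ∑ _a ∈ s, (1 : ZMod 2) = 0 :=
    sum_involution (fun a _ => σ a) (fun _ _ => rfl) (fun a ha _ => hσ_ne a ha) hσ_mem hσ_invol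
  rwa [sum_const, nsmul_one, ZMod.natCast_eq_zero_iff_even] at h

section TranslationByInvolution

variable {G A : Type*} [AddGroup G] [Fintype G] [DecidableEq A] {x : G}

lemma card_filter_sub_eq_neg [AddGroup A] (f : G → A) (hx : x + x = 0) (c : A) :
    #{y | f (x + y) - f y = c} = #{y | f (x + y) - f y = -c} := by
  have hxx (y : G) : x + (x + y) = y := by rw [← add_assoc, hx, zero_add]
  refine card_nbij' (x + ·) (x + ·) (fun y hy => ?_) (fun y hy => ?_) (fun y _ => hxx y)
    (fun y _ => hxx y) <;> simp only [mem_coe, mem_filter, mem_univ, true_and] at hy ⊢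
  · rw [hxx, ← hy, neg_sub]
  · rw [hxx, ← neg_sub, hy, neg_neg]

lemma even_card_filter_add_eq (f : G → A) (hx : x + x = 0) (hx₀ : x ≠ 0) :
    Even #{y | f (x + y) = f y} := by
  have hxx (y : G) : x + (x + y) = y := by rw [← add_assoc, hx, zero_add]
  refine even_card_of_involution (x + ·) (fun y hy => ?_) (fun y _ => hxx y)
    (fun y _ => by simpa using hx₀)
  simp only [mem_filter, mem_univ, true_and] at hy ⊢
  rw [hxx, hy]

end TranslationByInvolution

section DotProductCharacter

variable {R ι : Type*} [CommRing R] [Fintype R] [DecidableEq R] [Fintype ι] [DecidableEq ι]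
  {ψ : AddChar R ℂ}

lemma AddChar.sum_apply_dotProduct (hψ : ψ.IsPrimitive) (z : ι → R) :
    ∑ w : ι → R, ψ (w ⬝ᵥ z) =
      if z = 0 then (Fintype.card R : ℂ) ^ Fintype.card ι else 0 := by
  simp only [dotProduct, AddChar.map_sum_eq_prod]
  rw [← Fintype.prod_sum (fun i t => ψ (t * z i))]
  simp only [AddChar.sum_mulShift _ hψ, Nat.cast_ite, Nat.cast_zero, Fintype.prod_ite_zero,
    prod_const, card_univ, ← funext_iff]
  rfl

/-- Wiener–Khinchin for the Fourier transform `ĝ w = ∑ u, g u * ψ (w ⬝ᵥ u)` on `ι → R`. -/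
lemma sum_norm_sq_mul_apply_dotProduct_neg (hψ : ψ.IsPrimitive) (g : (ι → R) → ℂ)
    (x : ι → R) :
    ∑ w, ((‖∑ u, g u * ψ (w ⬝ᵥ u)‖ ^ 2 : ℝ) : ℂ) * ψ (w ⬝ᵥ -x) =
      (Fintype.card R : ℂ) ^ Fintype.card ι * ∑ y, g (y + x) * conj (g y) := by
  have hψ_sub (w u y : ι → R) :
      ψ (w ⬝ᵥ (u - y - x)) = ψ (w ⬝ᵥ u) * conj (ψ (w ⬝ᵥ y)) * ψ (w ⬝ᵥ -x) := by
    rw [sub_sub, sub_eq_add_neg, neg_add, dotProduct_add, dotProduct_add, dotProduct_neg w y,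
      AddChar.map_add_eq_mul, AddChar.map_add_eq_mul, AddChar.map_neg_eq_conj, mul_assoc]
  calc ∑ w, ((‖∑ u, g u * ψ (w ⬝ᵥ u)‖ ^ 2 : ℝ) : ℂ) * ψ (w ⬝ᵥ -x)
      = ∑ w, ∑ y, ∑ u, g u * conj (g y) * ψ (w ⬝ᵥ (u - y - x)) := by
        refine sum_congr rfl fun w _ => ?_
        rw [Complex.ofReal_pow, ← Complex.mul_conj', map_sum, sum_mul_sum, sum_comm, sum_mul]
        refine sum_congr rfl fun y _ => ?_
        rw [sum_mul]
        refine sum_congr rfl fun u _ => ?_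
        rw [hψ_sub, map_mul]
        ring
    _ = ∑ y, ∑ u, g u * conj (g y) * ∑ w, ψ (w ⬝ᵥ (u - y - x)) := by
        rw [sum_comm]
        refine sum_congr rfl fun y _ => ?_
        rw [sum_comm]
        simp_rw [mul_sum]
    _ = ∑ y, g (y + x) * conj (g y) * (Fintype.card R : ℂ) ^ Fintype.card ι := by
        refine sum_congr rfl fun y _ => ?_
        simp_rw [AddChar.sum_apply_dotProduct hψ, sub_sub, sub_eq_zero, mul_ite, mul_zero]
        rw [sum_ite_eq']
        simp
    _ = _ := by rw [mul_sum]; simp_rw [mul_comm]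

lemma sum_mul_conj_eq_zero_of_norm_sq_eq (hψ : ψ.IsPrimitive) {g : (ι → R) → ℂ}
    (hg : ∀ w, ‖∑ u, g u * ψ (w ⬝ᵥ u)‖ ^ 2 = (Fintype.card R : ℝ) ^ Fintype.card ι)
    {x : ι → R} (hx : x ≠ 0) :
    ∑ y, g (y + x) * conj (g y) = 0 := by
  have h := sum_norm_sq_mul_apply_dotProduct_neg hψ g x
  simp only [hg, Complex.ofReal_pow, Complex.ofReal_natCast, ← mul_sum,
    AddChar.sum_apply_dotProduct hψ, neg_eq_zero, hx, if_false, mul_zero] at h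
  exact (mul_eq_zero.mp h.symm).resolve_left
    (pow_ne_zero _ (Nat.cast_ne_zero.mpr Fintype.card_ne_zero))

end DotProductCharacter

lemma zetaC_pow_eq_stdAddChar {m : ℕ} [NeZero m] (k : ℕ) :
    zetaC m ^ k = ZMod.stdAddChar (k : ZMod m) := by
  rw [zetaC, ← Complex.exp_nat_mul, ← Int.cast_natCast (R := ZMod m), ZMod.stdAddChar_coe]
  push_cast
  ring_nf

lemma zetaC_pow_val {m : ℕ} [NeZero m] (a : ZMod m) : zetaC m ^ a.val = ZMod.stdAddChar a := by
  rw [zetaC_pow_eq_stdAddChar, ZMod.natCast_zmod_val]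

lemma zetaC_two : zetaC 2 = -1 := by
  rw [zetaC, ← Complex.exp_pi_mul_I]
  push_cast
  ring_nf

lemma neg_one_pow_sum_val_mul_val {ι : Type*} [Fintype ι] (w u : ι → ZMod 2) :
    (-1 : ℂ) ^ (∑ i, (w i).val * (u i).val) = ZMod.stdAddChar (w ⬝ᵥ u) := by
  rw [← zetaC_two, zetaC_pow_eq_stdAddChar]
  push_cast [ZMod.natCast_val, ZMod.cast_id]
  rfl

lemma IsGBF.norm_sq_sum_stdAddChar {m n : ℕ} [NeZero m] {f : (Fin n → ZMod 2) → ZMod m}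
    (hf : IsGBF m n f) (w : Fin n → ZMod 2) :
    ‖∑ u, ZMod.stdAddChar (f u) * ZMod.stdAddChar (w ⬝ᵥ u)‖ ^ 2 =
      (Fintype.card (ZMod 2) : ℝ) ^ Fintype.card (Fin n) := by
  simpa [zetaC_pow_val, neg_one_pow_sum_val_mul_val] using hf w

lemma IsGBF.sum_zetaC_pow_sub_eq_zero {m n : ℕ} [NeZero m] {f : (Fin n → ZMod 2) → ZMod m}
    (hf : IsGBF m n f) {x : Fin n → ZMod 2} (hx : x ≠ 0) :
    ∑ y, zetaC m ^ (f (x + y) - f y).val = 0 := by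
  have h := sum_mul_conj_eq_zero_of_norm_sq_eq (ZMod.isPrimitive_stdAddChar 2)
    hf.norm_sq_sum_stdAddChar hx
  simp only [← AddChar.map_neg_eq_conj, ← AddChar.map_add_eq_mul, ← sub_eq_add_neg] at h
  simpa only [zetaC_pow_val, add_comm x] using h

theorem stmt_2_general (m n : ℕ) (hm : 2 ≤ m)
    (f : (Fin n → ZMod 2) → ZMod m) (hf : IsGBF m n f) :
    (∀ x : Fin n → ZMod 2, ∀ c : ZMod m,
      (Finset.univ.filter (fun y : Fin n → ZMod 2 => f (x + y) - f y = c)).card =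
        (Finset.univ.filter (fun y : Fin n → ZMod 2 => f (x + y) - f y = -c)).card) ∧
    (∀ x : Fin n → ZMod 2, x ≠ 0 →
      Even (Finset.univ.filter (fun y : Fin n → ZMod 2 => f (x + y) = f y)).card) ∧
    (∀ x : Fin n → ZMod 2, x ≠ 0 →
      ∑ y : Fin n → ZMod 2, zetaC m ^ (f (x + y) - f y).val = 0) := by
  have : NeZero m := ⟨by omega⟩
  have add_self (x : Fin n → ZMod 2) : x + x = 0 := funext fun i => CharTwo.add_self_eq_zero (x i)
  exact ⟨fun x => card_filter_sub_eq_neg f (add_self x),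
    fun x hx => even_card_filter_add_eq f (add_self x) hx,
    fun x hx => hf.sum_zetaC_pow_sub_eq_zero hx⟩

theorem stmt_2 (m n : ℕ) (hm : 2 ≤ m) (hn : 1 ≤ n)
    (f : (Fin n → ZMod 2) → ZMod m) (hf : IsGBF m n f) :
    (∀ x : Fin n → ZMod 2, ∀ c : ZMod m,
      (Finset.univ.filter (fun y : Fin n → ZMod 2 => f (x + y) - f y = c)).card =
        (Finset.univ.filter (fun y : Fin n → ZMod 2 => f (x + y) - f y = -c)).card) ∧
    (∀ x : Fin n → ZMod 2, x ≠ 0 →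
      Even (Finset.univ.filter (fun y : Fin n → ZMod 2 => f (x + y) = f y)).card) ∧
    (∀ x : Fin n → ZMod 2, x ≠ 0 →
      ∑ y : Fin n → ZMod 2, zetaC m ^ (f (x + y) - f y).val = 0) :=
  stmt_2_general m n hm f hf
end

section
/- Let f : G → ZMod m be an (m,n)-generalized bent function, and let p be a prime with p ∣ m and p > 2^n. Then the function x ↦ π(f x), where π : ZMod m → ZMod (m/p) is the natural reduction map (well defined since (m/p) ∣ m), is an (m/p, n)-generalized bent function. -/
/-!
Write `h = ζ_m ^ f`. Since `h` is unimodular, `f` is bent exactly when the autocorrelations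
`∑ₓ h x · conj (h (x + z))`, `z ≠ 0`, vanish. Each of them is a sum of `2 ^ n < p` roots of unity,
and the reduction of `f` modulo `m / p` replaces every term by its `p`-th power. By Frobenius,
`∑ wᵢ ^ p = (∑ wᵢ) ^ p - p r = -p r` for an algebraic integer `r`, and every conjugate of `r` has
modulus at most `2 ^ n / p < 1`. A nonzero algebraic integer has a conjugate of modulus at least
`1`, so `r = 0`: the reduced autocorrelations vanish too, and the reduced function is bent.
-/

open Finset NumberField ComplexConjugate

theorem exists_sum_pow_prime_eq {ι R : Type*} [CommSemiring R] {p : ℕ} (hp : p.Prime)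
    (s : Finset ι) (f : ι → R) : ∃ r, (∑ i ∈ s, f i) ^ p = ∑ i ∈ s, f i ^ p + p * r := by
  classical
  induction s using Finset.induction_on with
  | empty => exact ⟨0, by simp [hp.ne_zero]⟩
  | insert a s ha ih =>
    obtain ⟨r, hr⟩ := ih
    obtain ⟨t, ht⟩ := exists_add_pow_prime_eq hp (f a) (∑ i ∈ s, f i)
    exact ⟨r + f a * (∑ i ∈ s, f i) * t, by rw [sum_insert ha, sum_insert ha, ht, hr]; ring⟩

theorem NumberField.sum_pow_prime_eq_zero {K ι : Type*} [Field K] [NumberField K] [Fintype ι]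
    {w : ι → 𝓞 K} {p : ℕ} (hw : ∀ i, house (w i : K) ≤ 1) (hp : p.Prime)
    (hcard : Fintype.card ι < p) (h : ∑ i, w i = 0) : ∑ i, w i ^ p = 0 := by
  obtain ⟨r, hsum⟩ : ∃ r : 𝓞 K, ∑ i, w i ^ p = p * r := by
    obtain ⟨r, hr⟩ := exists_sum_pow_prime_eq hp univ w
    rw [h, zero_pow hp.ne_zero] at hr
    exact ⟨-r, by linear_combination -hr⟩
  rw [hsum]
  by_contra hne
  have hr0 : r ≠ 0 := right_ne_zero_of_mul hne
  have hlow : (p : ℝ) ≤ house ((∑ i, w i ^ p : 𝓞 K) : K) := by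
    rw [hsum]
    push_cast
    rw [house_nat_mul]
    exact le_mul_of_one_le_right (Nat.cast_nonneg p)
      (one_le_house_of_isIntegral (RingOfIntegers.isIntegral_coe _)
        (RingOfIntegers.coe_ne_zero_iff.mpr hr0))
  have hup : house ((∑ i, w i ^ p : 𝓞 K) : K) ≤ Fintype.card ι := by
    push_cast
    calc house (∑ i, (w i : K) ^ p) ≤ ∑ i, house ((w i : K) ^ p) := house_sum_le_sum_house _ _
      _ ≤ ∑ _i : ι, (1 : ℝ) :=
          sum_le_sum fun i _ => (house_pow_le _ _).trans (pow_le_one₀ (house_nonneg _) (hw i))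
      _ = Fintype.card ι := by simp
  exact (hlow.trans hup).not_gt (by exact_mod_cast hcard)

theorem NumberField.house_le_one_of_pow_eq_one {K : Type*} [Field K] [NumberField K] {x : K}
    {m : ℕ} (hm : m ≠ 0) (hx : x ^ m = 1) : house x ≤ 1 := by
  rw [house_eq_sup']
  exact_mod_cast sup'_le _ _ fun σ _ =>
    (Complex.nnnorm_eq_one_of_pow_eq_one (by rw [← map_pow, hx, map_one]) hm).le

theorem Complex.sum_pow_prime_eq_zero {ι : Type*} [Fintype ι] {w : ι → ℂ} {m p : ℕ}
    (hm : m ≠ 0) (hw : ∀ i, w i ^ m = 1) (hp : p.Prime) (hcard : Fintype.card ι < p)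
    (h : ∑ i, w i = 0) : ∑ i, w i ^ p = 0 := by
  let K := IntermediateField.adjoin ℚ (Set.range w)
  have : FiniteDimensional ℚ K := IntermediateField.finiteDimensional_adjoin <| by
    rintro _ ⟨i, rfl⟩
    exact .of_pow (Nat.pos_of_ne_zero hm) (by rw [hw i]; exact isIntegral_one)
  have : NumberField K := {}
  let v : ι → K := fun i => ⟨w i, IntermediateField.subset_adjoin _ _ ⟨i, rfl⟩⟩
  have hv : ∀ i, v i ^ m = 1 := fun i => Subtype.ext (by simpa using hw i)
  let u : ι → 𝓞 K := fun i =>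
    ⟨v i, .of_pow (Nat.pos_of_ne_zero hm) (by rw [hv i]; exact isIntegral_one)⟩
  let φ : 𝓞 K →+* ℂ := K.val.toRingHom.comp (algebraMap (𝓞 K) K)
  have hφ : Function.Injective φ := Subtype.val_injective.comp RingOfIntegers.coe_injective
  have hu : ∀ i, φ (u i) = w i := fun _ => rfl
  have hsum : ∑ i, u i = 0 := hφ (by simpa [map_sum, hu] using h)
  have := NumberField.sum_pow_prime_eq_zero (fun i => house_le_one_of_pow_eq_one hm (hv i))
    hp hcard hsum
  simpa [map_sum, hu] using congrArg φ this

section Walsh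

variable {n : ℕ}

noncomputable def walsh (y x : Fin n → ZMod 2) : ℂ :=
  (-1 : ℂ) ^ (∑ i : Fin n, (y i).val * (x i).val)

noncomputable def walshTransform (g : (Fin n → ZMod 2) → ℂ) (y : Fin n → ZMod 2) : ℂ :=
  ∑ x, g x * walsh y x

noncomputable def autocorrelation (g : (Fin n → ZMod 2) → ℂ) (z : Fin n → ZMod 2) : ℂ :=
  ∑ x, g x * conj (g (x + z))

theorem walsh_eq_neg_one_pow_dotProduct (y x : Fin n → ZMod 2) :
    walsh y x = (-1 : ℂ) ^ (y ⬝ᵥ x).val := by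
  rw [walsh, neg_one_pow_eq_pow_mod_two, ← ZMod.val_natCast]
  push_cast [ZMod.natCast_val, ZMod.cast_id]
  rfl

theorem walsh_add_right (y x x' : Fin n → ZMod 2) :
    walsh y (x + x') = walsh y x * walsh y x' := by
  simp only [walsh_eq_neg_one_pow_dotProduct, dotProduct_add, ZMod.val_add,
    ← neg_one_pow_eq_pow_mod_two, pow_add]

theorem walsh_add_left (y y' x : Fin n → ZMod 2) :
    walsh (y + y') x = walsh y x * walsh y' x := by
  simp only [walsh_eq_neg_one_pow_dotProduct, add_dotProduct, ZMod.val_add,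
    ← neg_one_pow_eq_pow_mod_two, pow_add]

@[simp] theorem walsh_zero_right (y : Fin n → ZMod 2) : walsh y 0 = 1 := by
  simp [walsh]

@[simp] theorem walsh_mul_self (y x : Fin n → ZMod 2) : walsh y x * walsh y x = 1 := by
  rw [← pow_two, walsh, ← pow_mul, pow_mul', neg_one_sq, one_pow]

@[simp] theorem conj_walsh (y x : Fin n → ZMod 2) : conj (walsh y x) = walsh y x := by
  simp [walsh]

theorem sum_walsh_of_ne_zero {z : Fin n → ZMod 2} (hz : z ≠ 0) : ∑ y, walsh y z = 0 := by
  obtain ⟨i, hi⟩ := Function.ne_iff.mp hz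
  have hval : (z i).val = 1 := by
    have := ZMod.val_lt (z i)
    have := (ZMod.val_ne_zero (z i)).mpr hi
    omega
  have hflip (y : Fin n → ZMod 2) : walsh (y + Pi.single i 1) z = -walsh y z := by
    rw [walsh_add_left, walsh_eq_neg_one_pow_dotProduct (Pi.single i 1), single_dotProduct,
      one_mul, hval, pow_one, mul_neg_one]
  have := Equiv.sum_comp (Equiv.addRight (Pi.single i 1)) (walsh · z)
  simp only [Equiv.coe_addRight, hflip, sum_neg_distrib] at this
  linear_combination -this / 2

theorem sum_walsh (z : Fin n → ZMod 2) :
    ∑ y, walsh y z = if z = 0 then 2 ^ n else 0 := by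
  split_ifs with hz
  · simp [hz]
  · exact sum_walsh_of_ne_zero hz

theorem normSq_walshTransform (g : (Fin n → ZMod 2) → ℂ) (y : Fin n → ZMod 2) :
    (Complex.normSq (walshTransform g y) : ℂ) = ∑ z, autocorrelation g z * walsh y z := by
  rw [← Complex.mul_conj, walshTransform, map_sum, sum_mul_sum]
  simp_rw [autocorrelation, sum_mul]
  conv_rhs => rw [sum_comm]
  refine sum_congr rfl fun x _ => ?_
  rw [← Equiv.sum_comp (Equiv.addLeft x)]
  refine sum_congr rfl fun z _ => ?_
  simp only [Equiv.coe_addLeft, map_mul, conj_walsh, walsh_add_right]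
  linear_combination g x * conj (g (x + z)) * walsh y z * (walsh_mul_self y x)

theorem sum_normSq_walshTransform_mul_walsh (g : (Fin n → ZMod 2) → ℂ) (z : Fin n → ZMod 2) :
    ∑ y, (Complex.normSq (walshTransform g y) : ℂ) * walsh y z =
      2 ^ n * autocorrelation g z := by
  have hneg : -z = z := funext fun i => ZMod.neg_eq_self_mod_two (z i)
  simp_rw [normSq_walshTransform, sum_mul, mul_assoc, ← walsh_add_right]
  rw [sum_comm]
  simp_rw [← mul_sum, sum_walsh, add_eq_zero_iff_eq_neg, hneg, mul_ite, mul_zero, sum_ite_eq',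
    mem_univ, if_true, mul_comm]

theorem norm_walshTransform_sq_eq_iff {g : (Fin n → ZMod 2) → ℂ} (hg : ∀ x, ‖g x‖ = 1) :
    (∀ y, ‖walshTransform g y‖ ^ 2 = 2 ^ n) ↔ ∀ z ≠ 0, autocorrelation g z = 0 := by
  simp_rw [Complex.sq_norm]
  constructor
  · intro h z hz
    have := sum_normSq_walshTransform_mul_walsh g z
    simp_rw [h, Complex.ofReal_pow, Complex.ofReal_ofNat, ← mul_sum, sum_walsh_of_ne_zero hz,
      mul_zero] at this
    exact (mul_eq_zero.mp this.symm).resolve_left (pow_ne_zero n two_ne_zero)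
  · intro h y
    have hzero : autocorrelation g 0 = 2 ^ n := by
      simp [autocorrelation, Complex.mul_conj, Complex.normSq_eq_norm_sq, hg]
    have := normSq_walshTransform g y
    rw [sum_eq_single 0 (fun z _ hz => by rw [h z hz, zero_mul]) (by simp), hzero,
      walsh_zero_right, mul_one] at this
    exact_mod_cast this

end Walsh

theorem zetaC_pow_self (m : ℕ) : zetaC m ^ m = 1 := by
  rcases eq_or_ne m 0 with rfl | hm
  · exact pow_zero _
  · exact (Complex.isPrimitiveRoot_exp m hm).pow_eq_one

theorem norm_zetaC (m : ℕ) : ‖zetaC m‖ = 1 := by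
  simp [zetaC, Complex.norm_exp]

theorem zetaC_mul_pow {p : ℕ} (hp : p ≠ 0) (q : ℕ) : zetaC (p * q) ^ p = zetaC q := by
  rw [zetaC, zetaC, ← Complex.exp_nat_mul, Nat.cast_mul, ← mul_div_assoc,
    mul_div_mul_left _ _ (Nat.cast_ne_zero.mpr hp)]

theorem zetaC_pow_val_castHom {m p : ℕ} [NeZero m] (hpm : p ∣ m) (a : ZMod m) :
    zetaC (m / p) ^ (ZMod.castHom (Nat.div_dvd_of_dvd hpm) (ZMod (m / p)) a).val =
      (zetaC m ^ a.val) ^ p := by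
  have hζ : zetaC m ^ p = zetaC (m / p) := by
    simpa only [Nat.mul_div_cancel' hpm] using
      zetaC_mul_pow (ne_zero_of_dvd_ne_zero (NeZero.ne m) hpm) (m / p)
  rw [ZMod.castHom_apply, ← ZMod.natCast_val a, ZMod.val_natCast,
    ← pow_eq_pow_mod _ (zetaC_pow_self _), ← pow_mul, mul_comm, pow_mul, hζ]

theorem isGBF_iff_autocorrelation (m n : ℕ) (f : (Fin n → ZMod 2) → ZMod m) :
    IsGBF m n f ↔ ∀ z ≠ 0, autocorrelation (fun x => zetaC m ^ (f x).val) z = 0 :=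
  norm_walshTransform_sq_eq_iff fun x => by rw [norm_pow, norm_zetaC, one_pow]

theorem stmt_3_general (m n : ℕ) (hm : 2 ≤ m) (p : ℕ) (hp : p.Prime)
    (hpm : p ∣ m) (hpn : 2 ^ n < p)
    (f : (Fin n → ZMod 2) → ZMod m) (hf : IsGBF m n f) :
    IsGBF (m / p) n
      (fun x => ZMod.castHom (Nat.div_dvd_of_dvd hpm) (ZMod (m / p)) (f x)) := by
  have : NeZero m := ⟨by omega⟩
  rw [isGBF_iff_autocorrelation] at hf ⊢
  intro z hz
  rw [autocorrelation]
  have hroot (x : Fin n → ZMod 2) :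
      (zetaC m ^ (f x).val * conj (zetaC m ^ (f (x + z)).val)) ^ m = 1 := by
    rw [mul_pow, ← map_pow, ← pow_mul, ← pow_mul, mul_comm _ m, mul_comm _ m, pow_mul, pow_mul,
      zetaC_pow_self, one_pow, one_pow, map_one, one_mul]
  have hcard : Fintype.card (Fin n → ZMod 2) < p := by simpa using hpn
  convert Complex.sum_pow_prime_eq_zero (by omega) hroot hp hcard (hf z hz) using 2 with x
  rw [zetaC_pow_val_castHom hpm, zetaC_pow_val_castHom hpm, mul_pow, map_pow]

theorem stmt_3 (m n : ℕ) (hm : 2 ≤ m) (hn : 1 ≤ n) (p : ℕ) (hp : p.Prime)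
    (hpm : p ∣ m) (hpn : 2 ^ n < p)
    (f : (Fin n → ZMod 2) → ZMod m) (hf : IsGBF m n f) :
    IsGBF (m / p) n
      (fun x => ZMod.castHom (Nat.div_dvd_of_dvd hpm) (ZMod (m / p)) (f x)) :=
  stmt_3_general m n hm p hp hpm hpn f hf
end

section
/- Let m = ∏_{i=1}^{s} p_i^{α_i} with p₁ < p₂ < ⋯ < p_s odd primes and α_i ≥ 1, let n ≥ 1, and let 1 ≤ r ≤ s be such that p₁ + p_i > 2^n for every i with r < i ≤ s. If there is no (∏_{i=1}^{r} p_i^{α_i}, n)-generalized bent function, then there is no (m, n)-generalized bent function. -/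
/-!
A function `f` is an `(m, n)`-GBF exactly when all its autocorrelations
`∑ x, ζ_m ^ (f x - f (x + w))`, `w ≠ 0`, vanish (Fourier inversion on `(ℤ/2)ⁿ`). Write
`m = M * q ^ (γ + 1)` with `q` one of the primes `p_{r+1}, …, p_s` and reduce the exponents of `f`
modulo `M`. Applying the Galois automorphisms `ζ ↦ ζ ^ u`, `u ≡ 1 mod M`, to a vanishing sum of
`m`-th roots of unity shows that its parts over the exponent classes modulo `q ^ (γ + 1)`,
evaluated at `ζ_M`, are constant along the classes modulo `q ^ γ`. If they did not all vanish,
a whole fibre of `q` classes would be occupied. Since the sum has only `2 ^ n < p₁ + q` terms,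
bounds on short sums of `M`-th roots of unity (a nonempty vanishing sum has at least `p` terms
for some prime `p ∣ M`; for odd `M`, a sum equal to `1` with at most `minFac M` terms contains
the term `1`) force the zero class to be a singleton fixed by `x ↦ x + w`, so `w = 0`. Removing
the primes `p_s, …, p_{r+1}` one at a time leaves a `(∏_{i ≤ r} p_i ^ α_i, n)`-GBF.
-/

open Finset

section RootsOfUnity

variable {m : ℕ} {ζ : ℂ}

lemma pow_val_add [NeZero m] (h : ζ ^ m = 1) (a b : ZMod m) :
    ζ ^ (a + b).val = ζ ^ a.val * ζ ^ b.val := by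
  simpa only [AddChar.zmodChar_apply] using (AddChar.zmodChar m h).map_add_eq_mul a b

lemma pow_val_neg [NeZero m] (h : ζ ^ m = 1) (a : ZMod m) :
    ζ ^ (-a).val = starRingEnd ℂ (ζ ^ a.val) := by
  simpa only [AddChar.zmodChar_apply] using (AddChar.zmodChar m h).map_neg_eq_conj a

lemma pow_val_castHom {N : ℕ} [NeZero N] (hd : m ∣ N) (h : ζ ^ m = 1) (a : ZMod N) :
    ζ ^ a.val = ζ ^ (ZMod.castHom hd (ZMod m) a).val := by
  rw [ZMod.castHom_apply, ZMod.cast_eq_val, ZMod.val_natCast, ← pow_eq_pow_mod _ h]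

lemma IsPrimitiveRoot.pow_val_eq_one_iff [NeZero m] (hζ : IsPrimitiveRoot ζ m) (a : ZMod m) :
    ζ ^ a.val = 1 ↔ a = 0 := by
  rw [hζ.pow_eq_one_iff_dvd, ← ZMod.natCast_eq_zero_iff, ZMod.natCast_val, ZMod.cast_id]

lemma IsPrimitiveRoot.mul_of_coprime {G : Type*} [CommMonoid G] {M Q : ℕ} {η θ : G}
    (hη : IsPrimitiveRoot η M) (hθ : IsPrimitiveRoot θ Q) (hMQ : M.Coprime Q) :
    IsPrimitiveRoot (η * θ) (M * Q) := by
  rw [IsPrimitiveRoot.iff_orderOf] at *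
  rw [(Commute.all η θ).orderOf_mul_eq_mul_orderOf_of_coprime (hη ▸ hθ ▸ hMQ), hη, hθ]

open Polynomial in
/-- Both roots are roots of the same irreducible polynomial over `ℚ`, the cyclotomic one. -/
lemma IsPrimitiveRoot.sum_pow_add_intCast_eq_zero (hm : 0 < m) {ζ' : ℂ}
    (hζ : IsPrimitiveRoot ζ m) (hζ' : IsPrimitiveRoot ζ' m) {A : Type*} (s : Finset A)
    (e : A → ℕ) (k : ℤ) (h : ∑ x ∈ s, ζ ^ e x + k = 0) : ∑ x ∈ s, ζ' ^ e x + k = 0 := by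
  have aeval_eq (w : ℂ) : aeval w (∑ x ∈ s, X ^ e x + C (k : ℚ)) = ∑ x ∈ s, w ^ e x + k := by
    simp
  obtain ⟨P, hP⟩ : cyclotomic m ℚ ∣ ∑ x ∈ s, X ^ e x + C (k : ℚ) := by
    rw [cyclotomic_eq_minpoly_rat hζ hm]
    exact minpoly.dvd ℚ ζ (by rw [aeval_eq, h])
  have hroot : aeval ζ' (cyclotomic m ℚ) = 0 := by
    simpa [aeval_def, eval₂_eq_eval_map] using hζ'.isRoot_cyclotomic hm
  rw [← aeval_eq, hP, map_mul, hroot, zero_mul]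

/-- `|u| = |u + 1| = 1` forces `u + 1 = -u ^ 2`, a root of unity of even order. -/
lemma add_one_pow_ne_one (hm : Odd m) {u : ℂ} (hu : u ^ m = 1) : (u + 1) ^ m ≠ 1 := by
  intro hw
  have mul_conj_eq_one {z : ℂ} (hz : z ^ m = 1) : z * starRingEnd ℂ z = 1 := by
    rw [Complex.mul_conj', Complex.norm_eq_one_of_pow_eq_one hz hm.pos.ne']
    simp
  have h1 := mul_conj_eq_one hu
  have h2 := mul_conj_eq_one hw
  rw [map_add, map_one] at h2
  have hcube : u + 1 = -u ^ 2 := by linear_combination u * h2 - u * h1 - h1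
  rw [hcube, neg_pow, hm.neg_one_pow, ← pow_mul, pow_mul', hu, one_pow] at hw
  norm_num at hw

lemma geom_sum_eq_ite {N : ℕ} {ρ : ℂ} (h : ρ ^ N = 1) :
    ∑ j ∈ range N, ρ ^ j = if ρ = 1 then (N : ℂ) else 0 := by
  split_ifs with hρ
  · simp [hρ]
  · rw [geom_sum_eq hρ, h, sub_self, zero_div]

lemma sum_range_mul_filter_dvd {R : Type*} [AddCommMonoid R] {q : ℕ} (hq : 0 < q) (N : ℕ)
    (f : ℕ → R) : ∑ j ∈ range (q * N) with q ∣ j, f j = ∑ i ∈ range N, f (q * i) := by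
  rw [← sum_image fun a _ b _ hab => Nat.eq_of_mul_eq_mul_left hq hab]
  congr 1
  ext j
  simp only [mem_filter, mem_range, mem_image]
  constructor
  · rintro ⟨hj, i, rfl⟩
    exact ⟨i, Nat.lt_of_mul_lt_mul_left hj, rfl⟩
  · rintro ⟨i, hi, rfl⟩
    exact ⟨Nat.mul_lt_mul_of_pos_left hi hq, dvd_mul_right q i⟩

lemma sum_range_filter_not_dvd_pow {q γ : ℕ} (hq : 0 < q) {ρ : ℂ} (h : ρ ^ q ^ (γ + 1) = 1) :
    ∑ j ∈ range (q ^ (γ + 1)) with ¬ q ∣ j, ρ ^ j =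
      (if ρ = 1 then ((q ^ (γ + 1) : ℕ) : ℂ) else 0) -
        if ρ ^ q = 1 then ((q ^ γ : ℕ) : ℂ) else 0 := by
  have hmul : ∑ j ∈ range (q ^ (γ + 1)) with q ∣ j, ρ ^ j = ∑ i ∈ range (q ^ γ), (ρ ^ q) ^ i := by
    simp only [pow_succ', sum_range_mul_filter_dvd hq, pow_mul]
  rw [← geom_sum_eq_ite h, ← geom_sum_eq_ite (by rwa [← pow_mul, ← pow_succ']), ← hmul,
    ← sum_filter_add_sum_filter_not (range (q ^ (γ + 1))) (q ∣ ·)]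
  ring

end RootsOfUnity

lemma ZMod.eq_zero_of_add_self_eq_zero {N : ℕ} (hN : Odd N) {t : ZMod N} (ht : t + t = 0) :
    t = 0 := by
  have h2 : IsUnit (2 : ZMod N) := by
    simpa using (ZMod.unitOfCoprime 2 (Nat.coprime_two_left.mpr hN)).isUnit
  exact h2.mul_right_eq_zero.mp (by rw [two_mul, ht])

lemma Finset.sum_card_fiberwise_le_card {A B : Type*} [DecidableEq B] (s : Finset A) (d : A → B)
    (T : Finset B) : ∑ c ∈ T, #{x ∈ s | d x = c} ≤ #s :=
  (sum_card_fiberwise_eq_card_filter s T d).trans_le (card_filter_le _ _)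

lemma Nat.induction_on_mul_prime_pow {P : ℕ → Prop} (one : P 1)
    (mul : ∀ M ℓ γ, M ≠ 0 → ℓ.Prime → M.Coprime (ℓ ^ (γ + 1)) → P M → P (M * ℓ ^ (γ + 1)))
    (N : ℕ) (hN : N ≠ 0) : P N := by
  induction N using Nat.strong_induction_on with
  | _ N ih =>
  rcases eq_or_ne N 1 with rfl | hN1
  · exact one
  have hℓ := Nat.minFac_prime hN1
  obtain ⟨e, M, hℓM, hNM⟩ := Nat.exists_eq_pow_mul_and_not_dvd hN _ hℓ.ne_one
  have hM : M ≠ 0 := by rintro rfl; exact hN (by rw [hNM, mul_zero])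
  obtain ⟨γ, rfl⟩ : ∃ γ, e = γ + 1 := Nat.exists_eq_succ_of_ne_zero fun he => by
    simp only [he, pow_zero, one_mul] at hNM
    exact hℓM (hNM ▸ Nat.minFac_dvd N)
  rw [mul_comm] at hNM
  rw [hNM] at ih ⊢
  refine mul M _ γ hM hℓ (((Nat.Prime.coprime_iff_not_dvd hℓ).mpr hℓM).symm.pow_right _)
    (ih M (lt_mul_right (Nat.pos_of_ne_zero hM) (Nat.one_lt_pow γ.succ_ne_zero hℓ.one_lt)) hM)

namespace GeneralizedBent

lemma isPrimitiveRoot_zetaC (m : ℕ) [NeZero m] : IsPrimitiveRoot (zetaC m) m :=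
  Complex.isPrimitiveRoot_exp m (NeZero.ne m)

lemma zetaC_pow_pow_eq_one (m k : ℕ) [NeZero m] : (zetaC m ^ k) ^ m = 1 := by
  rw [← pow_mul, pow_mul', (isPrimitiveRoot_zetaC m).pow_eq_one, one_pow]

section Reduction

variable {M Q : ℕ}

abbrev castLeft : ZMod (M * Q) →+* ZMod M := ZMod.castHom (dvd_mul_right M Q) (ZMod M)

abbrev castRight : ZMod (M * Q) →+* ZMod Q := ZMod.castHom (dvd_mul_left Q M) (ZMod Q)

abbrev castPowSucc {q γ : ℕ} : ZMod (q ^ (γ + 1)) →+* ZMod (q ^ γ) :=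
  ZMod.castHom (pow_dvd_pow q γ.le_succ) (ZMod (q ^ γ))

lemma eq_zero_of_castLeft_eq_zero_of_castRight_eq_zero (hMQ : M.Coprime Q) {h : ZMod (M * Q)}
    (hM : castLeft h = 0) (hQ : castRight h = 0) : h = 0 := by
  apply (ZMod.chineseRemainder hMQ).injective
  rw [map_zero]
  exact Prod.ext (by simpa [ZMod.chineseRemainder, Prod.fst_zmod_cast] using hM)
    (by simpa [ZMod.chineseRemainder, Prod.snd_zmod_cast] using hQ)

lemma sum_pow_castLeft_mul_pow_castRight_add_intCast_eq_zero [NeZero M] [NeZero Q]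
    (hMQ : M.Coprime Q) {η θ : ℂ} (hη : IsPrimitiveRoot η M) (hθ : IsPrimitiveRoot θ Q)
    {A : Type*} (s : Finset A) (g : A → ZMod (M * Q)) (k : ℤ)
    (h : ∑ x ∈ s, zetaC (M * Q) ^ (g x).val + k = 0) :
    ∑ x ∈ s, η ^ (castLeft (g x)).val * θ ^ (castRight (g x)).val + k = 0 := by
  have := (isPrimitiveRoot_zetaC (M * Q)).sum_pow_add_intCast_eq_zero (NeZero.pos _)
    (hη.mul_of_coprime hθ hMQ) s (fun x => (g x).val) k h
  simpa only [mul_pow, ← pow_val_castHom _ hη.pow_eq_one, ← pow_val_castHom _ hθ.pow_eq_one]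
    using this

lemma card_filter_castPowSucc_eq (q γ : ℕ) [hq : Fact q.Prime] (t : ZMod (q ^ γ)) :
    #{c : ZMod (q ^ (γ + 1)) | castPowSucc c = t} = q := by
  have hπ : Function.Surjective (castPowSucc (q := q) (γ := γ)) := ZMod.castHom_surjective _
  have hfib (t' : ZMod (q ^ γ)) : #{c | castPowSucc c = t'} = #{c | castPowSucc c = t} :=
    AddMonoidHom.card_fiber_eq_of_mem_range castPowSucc.toAddMonoidHom (hπ t') (hπ t)
  have htot := card_eq_sum_card_fiberwise (s := univ) (t := univ)
    (f := castPowSucc (q := q) (γ := γ)) fun _ _ => mem_univ _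
  simp only [hfib, sum_const, card_univ, ZMod.card, smul_eq_mul, pow_succ] at htot
  exact (Nat.eq_of_mul_eq_mul_left (pow_pos hq.out.pos γ) htot).symm

end Reduction

section PrimePower

variable {q γ : ℕ} [hq : Fact q.Prime] {θ : ℂ} (hθ : IsPrimitiveRoot θ (q ^ (γ + 1)))
include hθ

lemma sum_pow_val_pow_filter_not_dvd (e : ZMod (q ^ (γ + 1))) :
    ∑ j ∈ range (q ^ (γ + 1)) with ¬ q ∣ j, (θ ^ e.val) ^ j =
      (if e = 0 then ((q ^ (γ + 1) : ℕ) : ℂ) else 0) -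
        if castPowSucc e = 0 then ((q ^ γ : ℕ) : ℂ) else 0 := by
  have hdvd (a : ℕ) : q ^ (γ + 1) ∣ a * q ↔ q ^ γ ∣ a := by
    rw [pow_succ]
    exact Nat.mul_dvd_mul_iff_right hq.out.pos
  rw [sum_range_filter_not_dvd_pow hq.out.pos
    (by rw [← pow_mul, pow_mul', hθ.pow_eq_one, one_pow])]
  simp only [hθ.pow_val_eq_one_iff, ← pow_mul, hθ.pow_eq_one_iff_dvd, hdvd, ZMod.castHom_apply,
    ZMod.cast_eq_val, ZMod.natCast_eq_zero_iff]

/-- Summing the relations against `θ ^ (-c₀ j)` and using the previous lemma isolates `E c₀`: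
`q ^ (γ + 1) • E c₀ = q ^ γ • ∑_{c ≡ c₀ mod q ^ γ} E c`. -/
lemma eq_of_castPowSucc_eq_of_sum_mul_pow_eq_zero (E : ZMod (q ^ (γ + 1)) → ℂ)
    (hE : ∀ j, ¬ q ∣ j → ∑ c, E c * (θ ^ c.val) ^ j = 0) {c c' : ZMod (q ^ (γ + 1))}
    (hcc : castPowSucc c = castPowSucc c') : E c = E c' := by
  have key (c₀ : ZMod (q ^ (γ + 1))) : ((q ^ (γ + 1) : ℕ) : ℂ) * E c₀ =
      ((q ^ γ : ℕ) : ℂ) * ∑ c with castPowSucc c = castPowSucc c₀, E c := by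
    have h0 : ∑ j ∈ range (q ^ (γ + 1)) with ¬ q ∣ j,
        (θ ^ (-c₀).val) ^ j * ∑ c, E c * (θ ^ c.val) ^ j = 0 :=
      sum_eq_zero fun j hj => by rw [hE j (mem_filter.mp hj).2, mul_zero]
    simp only [mul_sum] at h0
    rw [sum_comm] at h0
    have hc (c : ZMod (q ^ (γ + 1))) : ∑ j ∈ range (q ^ (γ + 1)) with ¬ q ∣ j,
        (θ ^ (-c₀).val) ^ j * (E c * (θ ^ c.val) ^ j) =
        E c * ((if c = c₀ then ((q ^ (γ + 1) : ℕ) : ℂ) else 0) -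
          if castPowSucc c = castPowSucc c₀ then ((q ^ γ : ℕ) : ℂ) else 0) := by
      have h := sum_pow_val_pow_filter_not_dvd hθ (c - c₀)
      simp only [sub_eq_zero, map_sub] at h
      rw [← h, mul_sum]
      refine sum_congr rfl fun j _ => ?_
      rw [sub_eq_add_neg, pow_val_add hθ.pow_eq_one, mul_pow]
      ring
    simp only [hc, mul_sub, sum_sub_distrib, mul_ite, mul_zero, sum_ite_eq', mem_univ,
      if_true] at h0
    rw [← sum_filter, ← sum_mul] at h0
    linear_combination h0
  refine mul_left_cancel₀ (Nat.cast_ne_zero.mpr (NeZero.ne (q ^ (γ + 1)))) ?_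
  rw [key, key, hcc]

end PrimePower

section ClassSums

variable {A : Type*} {M Q : ℕ}

/-- The coefficient of `θ ^ c` when `∑ x ∈ s, (zetaC M * θ) ^ g x`, for a primitive `Q`-th root
of unity `θ`, is grouped by the exponents modulo `Q`. -/
noncomputable def classSum (s : Finset A) (g : A → ZMod (M * Q)) (c : ZMod Q) : ℂ :=
  ∑ x ∈ s with castRight (g x) = c, zetaC M ^ (castLeft (g x)).val

lemma sum_classSum_mul [NeZero Q] (s : Finset A) (g : A → ZMod (M * Q)) (w : ZMod Q → ℂ) :
    ∑ c, classSum s g c * w c = ∑ x ∈ s, zetaC M ^ (castLeft (g x)).val * w (castRight (g x)) := by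
  rw [← sum_fiberwise s fun x => castRight (g x)]
  refine sum_congr rfl fun c _ => ?_
  rw [classSum, sum_mul]
  exact sum_congr rfl fun x hx => by rw [(mem_filter.mp hx).2]

variable {q γ : ℕ} [Fact q.Prime] [NeZero M] (hMq : M.Coprime (q ^ (γ + 1))) (s : Finset A)
  (g : A → ZMod (M * q ^ (γ + 1)))
include hMq

lemma classSum_add_ite_eq (k : ℤ) (hrel : ∑ x ∈ s, zetaC (M * q ^ (γ + 1)) ^ (g x).val + k = 0)
    {c c' : ZMod (q ^ (γ + 1))} (hcc : castPowSucc c = castPowSucc c') :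
    classSum s g c + (if c = 0 then (k : ℂ) else 0) =
      classSum s g c' + (if c' = 0 then (k : ℂ) else 0) := by
  have hθ := isPrimitiveRoot_zetaC (q ^ (γ + 1))
  refine eq_of_castPowSucc_eq_of_sum_mul_pow_eq_zero hθ
    (fun c => classSum s g c + if c = 0 then (k : ℂ) else 0) (fun j hj => ?_) hcc
  have hjq : j.Coprime (q ^ (γ + 1)) :=
    ((Nat.Prime.coprime_iff_not_dvd Fact.out).mpr hj).symm.pow_right _
  have h := sum_pow_castLeft_mul_pow_castRight_add_intCast_eq_zero hMq
    (isPrimitiveRoot_zetaC M) (hθ.pow_of_coprime j hjq) s g k hrel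
  simp only [add_mul, sum_add_distrib, ite_mul, zero_mul, sum_ite_eq', mem_univ, if_true,
    ZMod.val_zero, pow_zero, one_pow, mul_one, sum_classSum_mul]
  simpa only [pow_right_comm _ j] using h

lemma classSum_eq_of_sum_eq_zero (hrel : ∑ x ∈ s, zetaC (M * q ^ (γ + 1)) ^ (g x).val = 0)
    {c c' : ZMod (q ^ (γ + 1))} (hcc : castPowSucc c = castPowSucc c') :
    classSum s g c = classSum s g c' := by
  simpa using classSum_add_ite_eq hMq s g 0 (by simpa using hrel) hcc

lemma classSum_eq_classSum_zero_sub_one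
    (hrel : ∑ x ∈ s, zetaC (M * q ^ (γ + 1)) ^ (g x).val = 1) {c : ZMod (q ^ (γ + 1))}
    (hc : castPowSucc c = 0) (hc0 : c ≠ 0) : classSum s g c = classSum s g 0 - 1 := by
  have := classSum_add_ite_eq hMq s g (-1) (by rw [hrel]; push_cast; ring) (c' := 0)
    (by rw [hc, map_zero])
  simpa [hc0, sub_eq_add_neg] using this

end ClassSums

lemma exists_prime_dvd_le_card_of_sum_eq_zero {M : ℕ} [NeZero M] {A : Type} (s : Finset A)
    (g : A → ZMod M) (h : ∑ x ∈ s, zetaC M ^ (g x).val = 0) (hs : s.Nonempty) :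
    ∃ p, p.Prime ∧ p ∣ M ∧ p ≤ #s := by
  revert A
  refine Nat.induction_on_mul_prime_pow (P := fun M => ∀ {A : Type} (s : Finset A)
    (g : A → ZMod M), ∑ x ∈ s, zetaC M ^ (g x).val = 0 → s.Nonempty →
      ∃ p, p.Prime ∧ p ∣ M ∧ p ≤ #s) ?_ ?_ M (NeZero.ne M)
  · intro A s g h hs
    simp only [fun a : ZMod 1 => Nat.lt_one_iff.mp a.val_lt, pow_zero, sum_const, nsmul_eq_mul,
      mul_one, Nat.cast_eq_zero, card_eq_zero] at h
    exact absurd h hs.ne_empty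
  intro M ℓ γ hM hℓ hMℓ ih A s g h hs
  have : Fact ℓ.Prime := ⟨hℓ⟩
  have : NeZero M := ⟨hM⟩
  obtain ⟨x₀, hx₀⟩ := hs
  set d := fun x => castRight (g x)
  by_cases hall : Set.SurjOn d s {c | castPowSucc c = castPowSucc (d x₀)}
  · refine ⟨ℓ, hℓ, (dvd_pow_self ℓ γ.succ_ne_zero).mul_left M, ?_⟩
    have := card_le_card_of_surjOn d (t := {c | castPowSucc c = castPowSucc (d x₀)})
      fun c hc => hall (mem_filter.mp hc).2
    rwa [card_filter_castPowSucc_eq] at this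
  · obtain ⟨c₁, hc₁, hc₁s⟩ := Set.not_subset.mp hall
    have hempty : classSum s g c₁ = 0 :=
      sum_eq_zero fun x hx => absurd ⟨x, (mem_filter.mp hx).1, (mem_filter.mp hx).2⟩ hc₁s
    have hzero : classSum s g (d x₀) = 0 := by
      rw [classSum_eq_of_sum_eq_zero hMℓ s g h hc₁.symm, hempty]
    obtain ⟨p, hp, hpM, hps⟩ := ih _ _ hzero ⟨x₀, mem_filter.mpr ⟨hx₀, rfl⟩⟩
    exact ⟨p, hp, hpM.mul_right _, hps.trans (card_filter_le _ _)⟩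

/-- If every nonzero class of the zero fibre were occupied, `#s ≤ ℓ` would leave at most one
term in the zero class and make some nonzero class a singleton `{x₁}`; the constancy of the class
sums would then write `u + 1`, `u = zetaC M ^ castLeft (g x₁)`, as `0` or as an `M`-th root of
unity. -/
lemma exists_castPowSucc_eq_zero_forall_ne_of_sum_eq_one {A : Type} {M ℓ γ : ℕ} [Fact ℓ.Prime]
    [NeZero M] (hodd : Odd (M * ℓ ^ (γ + 1))) (hMℓ : M.Coprime (ℓ ^ (γ + 1))) (s : Finset A)
    (g : A → ZMod (M * ℓ ^ (γ + 1))) (h : ∑ x ∈ s, zetaC (M * ℓ ^ (γ + 1)) ^ (g x).val = 1)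
    (hsℓ : #s ≤ ℓ) : ∃ c, castPowSucc c = 0 ∧ c ≠ 0 ∧ ∀ x ∈ s, castRight (g x) ≠ c := by
  have hMo : Odd M := (Nat.odd_mul.mp hodd).1
  have hℓ3 : 3 ≤ ℓ := by
    have := Nat.odd_iff.mp (hodd.of_dvd_nat ((dvd_pow_self ℓ γ.succ_ne_zero).mul_left M))
    have := (Fact.out : ℓ.Prime).two_le
    omega
  set d := fun x => castRight (g x)
  by_contra! hall
  have h0F : (0 : ZMod (ℓ ^ (γ + 1))) ∈ ({c | castPowSucc c = 0} : Finset _) :=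
    mem_filter.mpr ⟨mem_univ _, map_zero _⟩
  set F := ({c | castPowSucc c = 0} : Finset (ZMod (ℓ ^ (γ + 1)))).erase 0
  have hF : #F = ℓ - 1 := by rw [card_erase_of_mem h0F, card_filter_castPowSucc_eq]
  have hpos (c) (hc : c ∈ F) : 1 ≤ #{x ∈ s | d x = c} := by
    have ⟨hc0, hcF⟩ := mem_erase.mp hc
    obtain ⟨x, hx, hxc⟩ := hall c (mem_filter.mp hcF).2 hc0
    exact card_pos.mpr ⟨x, mem_filter.mpr ⟨hx, hxc⟩⟩
  have hsum : #{x ∈ s | d x = 0} + ∑ c ∈ F, #{x ∈ s | d x = c} ≤ #s :=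
    (add_sum_erase _ (fun c => #{x ∈ s | d x = c}) h0F).trans_le (sum_card_fiberwise_le_card s d _)
  obtain ⟨c₁, hc₁F, hc₁⟩ : ∃ c ∈ F, #{x ∈ s | d x = c} ≤ 1 := by
    by_contra! hbig
    have := card_nsmul_le_sum F _ 2 fun c hc => hbig c hc
    rw [hF, smul_eq_mul] at this
    omega
  have h0 : #{x ∈ s | d x = 0} ≤ 1 := by
    have := card_nsmul_le_sum F _ 1 hpos
    rw [hF, smul_eq_mul] at this
    omega
  obtain ⟨x₁, hx₁⟩ := card_eq_one.mp (le_antisymm hc₁ (hpos c₁ hc₁F))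
  have hclass := classSum_eq_classSum_zero_sub_one hMℓ s g h
    (mem_filter.mp (mem_of_mem_erase hc₁F)).2 (ne_of_mem_erase hc₁F)
  rw [classSum, hx₁, sum_singleton] at hclass
  have hu := zetaC_pow_pow_eq_one M (castLeft (g x₁)).val
  rcases Nat.le_one_iff_eq_zero_or_eq_one.mp h0 with h0 | h0
  · rw [classSum, card_eq_zero.mp h0, sum_empty, zero_sub] at hclass
    rw [hclass, hMo.neg_one_pow] at hu
    norm_num at hu
  · obtain ⟨x₀, hx₀⟩ := card_eq_one.mp h0
    rw [classSum, hx₀, sum_singleton, eq_sub_iff_add_eq] at hclass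
    exact add_one_pow_ne_one hMo hu (hclass ▸ zetaC_pow_pow_eq_one M _)

lemma exists_eq_zero_of_sum_eq_one {M : ℕ} (hM : Odd M) {A : Type} (s : Finset A)
    (g : A → ZMod M) (h : ∑ x ∈ s, zetaC M ^ (g x).val = 1)
    (hs : ∀ p, p.Prime → p ∣ M → #s ≤ p) : ∃ x ∈ s, g x = 0 := by
  revert A
  refine Nat.induction_on_mul_prime_pow (P := fun M => Odd M → ∀ {A : Type} (s : Finset A)
    (g : A → ZMod M), ∑ x ∈ s, zetaC M ^ (g x).val = 1 → (∀ p, p.Prime → p ∣ M → #s ≤ p) →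
      ∃ x ∈ s, g x = 0) ?_ ?_ M hM.pos.ne' hM
  · intro _ A s g h _
    simp only [fun a : ZMod 1 => Nat.lt_one_iff.mp a.val_lt, pow_zero, sum_const, nsmul_eq_mul,
      mul_one, Nat.cast_eq_one, card_eq_one] at h
    obtain ⟨x, rfl⟩ := h
    exact ⟨x, mem_singleton_self x, Subsingleton.elim _ _⟩
  intro M ℓ γ hM0 hℓ hMℓ ih hodd A s g h hs
  have : Fact ℓ.Prime := ⟨hℓ⟩
  have : NeZero M := ⟨hM0⟩
  obtain ⟨c₁, hc₁, hc₁0, hc₁s⟩ := exists_castPowSucc_eq_zero_forall_ne_of_sum_eq_one hodd hMℓ s g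
    h (hs ℓ hℓ ((dvd_pow_self ℓ γ.succ_ne_zero).mul_left M))
  have hempty : classSum s g c₁ = 0 :=
    sum_eq_zero fun x hx => absurd (mem_filter.mp hx).2 (hc₁s x (mem_filter.mp hx).1)
  have hone : classSum s g 0 = 1 := by
    linear_combination hempty - classSum_eq_classSum_zero_sub_one hMℓ s g h hc₁ hc₁0
  obtain ⟨x, hx, hx0⟩ := ih (Nat.odd_mul.mp hodd).1 _ (fun x => castLeft (g x)) hone
    fun p hp hpM => (card_filter_le _ _).trans (hs p hp (hpM.mul_right _))
  exact ⟨x, (mem_filter.mp hx).1,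
    eq_zero_of_castLeft_eq_zero_of_castRight_eq_zero hMℓ hx0 (mem_filter.mp hx).2⟩

lemma card_eq_one_of_sum_eq_pow_val {M : ℕ} (hM : Odd M) {A : Type} (s : Finset A)
    (g : A → ZMod M) (b : ZMod M) (h : ∑ x ∈ s, zetaC M ^ (g x).val = zetaC M ^ b.val)
    (hs : ∀ p, p.Prime → p ∣ M → #s ≤ p) : #s = 1 := by
  classical
  have : NeZero M := ⟨hM.pos.ne'⟩
  have hζ := (isPrimitiveRoot_zetaC M).pow_eq_one
  have hshift : ∑ x ∈ s, zetaC M ^ (g x - b).val = 1 := by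
    simp_rw [sub_eq_add_neg, pow_val_add hζ (g _)]
    rw [← sum_mul, h, ← pow_val_add hζ, add_neg_cancel, ZMod.val_zero, pow_zero]
  obtain ⟨x₀, hx₀, hgx₀⟩ := exists_eq_zero_of_sum_eq_one hM s _ hshift hs
  have hrest : ∑ x ∈ s.erase x₀, zetaC M ^ (g x - b).val = 0 := by
    rw [← add_sum_erase s _ hx₀, hgx₀, ZMod.val_zero, pow_zero, add_eq_left] at hshift
    exact hshift
  by_contra hs1
  obtain ⟨p, hp, hpM, hps⟩ := exists_prime_dvd_le_card_of_sum_eq_zero _ _ hrest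
    (nonempty_iff_ne_empty.mpr fun he => hs1 (by rw [← card_erase_add_one hx₀, he, card_empty]))
  have := hs p hp hpM
  rw [card_erase_of_mem hx₀] at hps
  have := card_pos.mpr ⟨x₀, hx₀⟩
  omega

/-- A fibre of `castPowSucc` all of whose `q` classes are hit by `d` is mapped by `x ↦ x + z`
into the opposite fibre; with fewer than `2 * q` points the two fibres must coincide. -/
lemma eq_zero_of_castPowSucc_fibre_subset_range {G : Type*} [AddGroup G] [Fintype G] {q γ : ℕ}
    [Fact q.Prime] (hq : Odd q) (hG : Fintype.card G < q + q) {z : G} (d : G → ZMod (q ^ (γ + 1)))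
    (hd : ∀ x, d (x + z) = -d x) {t : ZMod (q ^ γ)}
    (ht : ∀ c, castPowSucc c = t → ∃ x, d x = c) : t = 0 := by
  classical
  set S : Finset G := {x | castPowSucc (d x) = t}
  set S' : Finset G := {x | castPowSucc (d x) = -t}
  have hS : q ≤ #S := by
    rw [← card_filter_castPowSucc_eq q γ t]
    refine card_le_card_of_surjOn d fun c hc => ?_
    obtain ⟨x, hx⟩ := ht c (mem_filter.mp hc).2
    exact ⟨x, mem_filter.mpr ⟨mem_univ _, hx ▸ (mem_filter.mp hc).2⟩, hx⟩
  have hS' : #S ≤ #S' := card_le_card_of_injOn (· + z)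
    (fun x hx => mem_filter.mpr ⟨mem_univ _, by rw [hd, map_neg, (mem_filter.mp hx).2]⟩)
    (add_left_injective z).injOn
  refine ZMod.eq_zero_of_add_self_eq_zero (hq.pow (n := γ)) (add_eq_zero_iff_eq_neg.mpr ?_)
  by_contra hne
  have hdisj : Disjoint S S' := disjoint_filter.mpr fun x _ h h' => hne (h.symm.trans h')
  have := card_union_of_disjoint hdisj ▸ card_le_univ (S ∪ S')
  omega

/-- Since `card G < 2 * q`, some class `c₁` of the zero fibre is a singleton `{x₁}`; the zero
class has the same class sum `zetaC M ^ castLeft (g x₁)` and at most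
`card G - (q - 1) ≤ minFac M` elements. -/
lemma card_filter_castRight_eq_zero_eq_one {G : Type} [Fintype G] {M q γ : ℕ} [Fact q.Prime]
    (hM : Odd M) (hMq : M.Coprime (q ^ (γ + 1))) (hqM : M.minFac ≤ q)
    (hG : Fintype.card G < M.minFac + q) (g : G → ZMod (M * q ^ (γ + 1)))
    (hrel : ∑ x, zetaC (M * q ^ (γ + 1)) ^ (g x).val = 0)
    (hne : ∀ c, castPowSucc c = 0 → ∃ x, castRight (g x) = c) :
    #({x | castRight (g x) = 0} : Finset G) = 1 := by
  classical
  have : NeZero M := ⟨hM.pos.ne'⟩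
  set d := fun x => castRight (g x)
  set F : Finset (ZMod (q ^ (γ + 1))) := {c | castPowSucc c = 0}
  have hF : #F = q := card_filter_castPowSucc_eq q γ 0
  have h0F : (0 : ZMod (q ^ (γ + 1))) ∈ F := mem_filter.mpr ⟨mem_univ _, map_zero _⟩
  have hpos (c) (hc : c ∈ F) : 1 ≤ #({x | d x = c} : Finset G) := by
    obtain ⟨x, hx⟩ := hne c (mem_filter.mp hc).2
    exact card_pos.mpr ⟨x, mem_filter.mpr ⟨mem_univ _, hx⟩⟩
  have hsum := sum_card_fiberwise_le_card univ d F
  obtain ⟨c₁, hc₁F, hc₁⟩ : ∃ c ∈ F, #({x | d x = c} : Finset G) ≤ 1 := by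
    by_contra! hbig
    have := card_nsmul_le_sum F _ 2 hbig
    rw [smul_eq_mul, card_univ] at *
    omega
  obtain ⟨x₁, hx₁⟩ := card_eq_one.mp (le_antisymm hc₁ (hpos c₁ hc₁F))
  refine card_eq_one_of_sum_eq_pow_val hM _ (fun x => castLeft (g x)) (castLeft (g x₁)) ?_
    fun p hp hpM => ?_
  · have h01 := classSum_eq_of_sum_eq_zero hMq univ g hrel (c := 0) (c' := c₁)
      (by rw [(mem_filter.mp hc₁F).2, map_zero])
    rwa [classSum, classSum, hx₁, sum_singleton] at h01
  · show #({x | d x = 0} : Finset G) ≤ p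
    rw [← add_sum_erase _ _ h0F] at hsum
    have := card_nsmul_le_sum (F.erase 0) _ 1 fun c hc => hpos c (mem_of_mem_erase hc)
    rw [card_erase_of_mem h0F, smul_eq_mul, card_univ] at *
    have := Nat.minFac_le_of_dvd hp.two_le hpM
    omega

/-- If some class sum did not vanish, every class of its fibre would be occupied; that fibre is
then the zero fibre, and its zero class is a singleton `{x₀}` that also contains `x₀ + z`. -/
lemma sum_zetaC_pow_castLeft_eq_zero {G : Type} [AddGroup G] [Fintype G] {M q γ : ℕ}
    [Fact q.Prime] (hM : Odd M) (hq : Odd q) (hMq : M.Coprime (q ^ (γ + 1)))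
    (hqM : M.minFac ≤ q) (hG : Fintype.card G < M.minFac + q) {z : G} (hz : z ≠ 0)
    (g : G → ZMod (M * q ^ (γ + 1))) (hg : ∀ x, g (x + z) = -g x)
    (hrel : ∑ x, zetaC (M * q ^ (γ + 1)) ^ (g x).val = 0) :
    ∑ x, zetaC M ^ (castLeft (g x)).val = 0 := by
  classical
  have : NeZero M := ⟨hM.pos.ne'⟩
  set d := fun x => castRight (g x)
  have hd (x : G) : d (x + z) = -d x := by simp only [d, hg, map_neg]
  have htot : ∑ c, classSum univ g c = ∑ x, zetaC M ^ (castLeft (g x)).val := by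
    simpa only [mul_one] using sum_classSum_mul univ g fun _ => 1
  rw [← htot]
  refine sum_eq_zero fun cs _ => ?_
  by_contra hcs
  have hne (c) (hc : castPowSucc c = castPowSucc cs) : ∃ x, d x = c := by
    by_contra! hempty
    refine hcs ?_
    rw [← classSum_eq_of_sum_eq_zero hMq univ g hrel hc]
    exact sum_eq_zero fun x hx => absurd (mem_filter.mp hx).2 (hempty x)
  have hcs0 := eq_zero_of_castPowSucc_fibre_subset_range hq (by omega) d hd hne
  obtain ⟨x₀, hx₀⟩ := card_eq_one.mp
    (card_filter_castRight_eq_zero_eq_one hM hMq hqM hG g hrel (hcs0 ▸ hne))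
  have hx₀' : d x₀ = 0 :=
    (mem_filter.mp (hx₀ ▸ mem_singleton_self x₀ : x₀ ∈ ({x | d x = 0} : Finset G))).2
  have hx₀z : x₀ + z ∈ ({x | d x = 0} : Finset G) :=
    mem_filter.mpr ⟨mem_univ _, by rw [hd, hx₀', neg_zero]⟩
  rw [hx₀, mem_singleton, add_eq_left] at hx₀z
  exact hz hx₀z

section Autocorrelation

variable {G : Type*} [AddCommGroup G] [Fintype G] {m : ℕ}

noncomputable def autocorrelation (f : G → ZMod m) (w : G) : ℂ :=
  ∑ x, zetaC m ^ (f x - f (x + w)).val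

lemma sum_mul_conj_sum [NeZero m] (f : G → ZMod m) (ψ : AddChar G ℂ) :
    (∑ x, zetaC m ^ (f x).val * ψ x) * starRingEnd ℂ (∑ x, zetaC m ^ (f x).val * ψ x) =
      ∑ w, ψ (-w) * autocorrelation f w := by
  have hζ := (isPrimitiveRoot_zetaC m).pow_eq_one
  rw [map_sum, sum_mul_sum]
  simp only [autocorrelation, mul_sum]
  conv_rhs => rw [sum_comm]
  refine sum_congr rfl fun x _ => ?_
  rw [← Equiv.sum_comp (Equiv.addLeft x)]
  refine sum_congr rfl fun w _ => ?_
  have hψ : ψ x * ψ (-x) = 1 := by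
    rw [← AddChar.map_add_eq_mul, add_neg_cancel, AddChar.map_zero_eq_one]
  rw [Equiv.coe_addLeft, map_mul, ← pow_val_neg hζ, ← AddChar.map_neg_eq_conj,
    sub_eq_add_neg (f x), pow_val_add hζ, neg_add_rev, AddChar.map_add_eq_mul]
  linear_combination zetaC m ^ (f x).val * zetaC m ^ (-f (x + w)).val * ψ (-w) * hψ

end Autocorrelation

def HasVanishingAutocorrelation (G : Type) [AddCommGroup G] [Fintype G] (m : ℕ) : Prop :=
  ∃ f : G → ZMod m, ∀ w ≠ 0, autocorrelation f w = 0

lemma HasVanishingAutocorrelation.of_mul_prime_pow {G : Type} [AddCommGroup G] [Fintype G]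
    (h2 : ∀ x : G, x + x = 0) {M q γ : ℕ} [Fact q.Prime] (hM : Odd M) (hq : Odd q)
    (hMq : M.Coprime (q ^ (γ + 1))) (hqM : M.minFac ≤ q) (hG : Fintype.card G < M.minFac + q)
    (h : HasVanishingAutocorrelation G (M * q ^ (γ + 1))) : HasVanishingAutocorrelation G M := by
  obtain ⟨f, hf⟩ := h
  refine ⟨fun x => castLeft (f x), fun w hw => ?_⟩
  have hg (x : G) : f (x + w) - f (x + w + w) = -(f x - f (x + w)) := by
    rw [add_assoc, h2, add_zero, neg_sub]
  simpa only [autocorrelation, map_sub] using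
    sum_zetaC_pow_castLeft_eq_zero hM hq hMq hqM hG hw _ hg (hf w hw)

section Walsh

variable {n : ℕ}

noncomputable def signChar : AddChar (ZMod 2) ℂ :=
  AddChar.zmodChar 2 (by norm_num : (-1 : ℂ) ^ 2 = 1)

noncomputable def walshChar (y : Fin n → ZMod 2) : AddChar (Fin n → ZMod 2) ℂ where
  toFun x := signChar (y ⬝ᵥ x)
  map_zero_eq_one' := by simp
  map_add_eq_mul' a b := by simp [dotProduct_add, AddChar.map_add_eq_mul]

lemma neg_one_pow_sum_eq_walshChar (y x : Fin n → ZMod 2) :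
    (-1 : ℂ) ^ (∑ i, (y i).val * (x i).val) = walshChar y x := by
  rw [walshChar, AddChar.coe_mk, signChar,
    ← AddChar.zmodChar_apply' (n := 2) (ζ := (-1 : ℂ)) (by norm_num)]
  congr 1
  simp [dotProduct]

lemma sum_walshChar (w : Fin n → ZMod 2) :
    ∑ y, walshChar y w = if w = 0 then (2 : ℂ) ^ n else 0 := by
  split_ifs with hw
  · simp [hw]
  obtain ⟨i, hi⟩ : ∃ i, w i ≠ 0 := by
    by_contra! h
    exact hw (funext h)
  have hwi : w i = 1 := by revert hi; generalize w i = b; decide +revert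
  have hshift := Equiv.sum_comp (Equiv.addRight (Pi.single i 1)) (walshChar · w)
  have hsign : signChar 1 = -1 := by simp [signChar, AddChar.zmodChar_apply, ZMod.val_one]
  simp only [Equiv.coe_addRight, walshChar, AddChar.coe_mk, add_dotProduct,
    AddChar.map_add_eq_mul, single_dotProduct, one_mul, hwi, ← sum_mul, hsign] at hshift
  simp only [walshChar, AddChar.coe_mk]
  linear_combination -hshift / 2

lemma isGBF_iff {m : ℕ} [NeZero m] (f : (Fin n → ZMod 2) → ZMod m) :
    IsGBF m n f ↔ ∀ w ≠ 0, autocorrelation f w = 0 := by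
  have hS (y : Fin n → ZMod 2) :
      ‖∑ x, zetaC m ^ (f x).val * (-1 : ℂ) ^ (∑ i, (y i).val * (x i).val)‖ ^ 2 = (2 : ℝ) ^ n ↔
        ∑ w, walshChar y (-w) * autocorrelation f w = 2 ^ n := by
    simp_rw [neg_one_pow_sum_eq_walshChar, ← sum_mul_conj_sum, Complex.mul_conj']
    norm_cast
  simp only [IsGBF, hS]
  constructor
  · intro h w₀ hw₀
    have hinv : ∑ y, walshChar y w₀ * ∑ w, walshChar y (-w) * autocorrelation f w =
        2 ^ n * autocorrelation f w₀ := by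
      simp only [mul_sum, ← mul_assoc, ← AddChar.map_add_eq_mul]
      rw [sum_comm]
      simp only [← sum_mul, sum_walshChar, ← sub_eq_add_neg, sub_eq_zero, ite_mul, zero_mul,
        sum_ite_eq, mem_univ, if_true]
    simp only [h, ← sum_mul, sum_walshChar, if_neg hw₀, zero_mul] at hinv
    exact (mul_eq_zero.mp hinv.symm).resolve_left (pow_ne_zero n two_ne_zero)
  · intro h y
    rw [sum_eq_single 0 (fun w _ hw => by rw [h w hw, mul_zero]) (by simp)]
    simp [autocorrelation]

lemma exists_isGBF_iff {m : ℕ} [NeZero m] :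
    (∃ f, IsGBF m n f) ↔ HasVanishingAutocorrelation (Fin n → ZMod 2) m :=
  exists_congr isGBF_iff

end Walsh

section PartialProducts

variable {s : ℕ} (p α : Fin s → ℕ)

def partialProd (t : ℕ) : ℕ := ∏ i ∈ univ.filter (fun i : Fin s => (i : ℕ) < t), p i ^ α i

lemma partialProd_succ {t : ℕ} (ht : t < s) :
    partialProd p α (t + 1) = partialProd p α t * p ⟨t, ht⟩ ^ α ⟨t, ht⟩ := by
  have : univ.filter (fun i : Fin s => (i : ℕ) < t + 1) =
      insert ⟨t, ht⟩ (univ.filter fun i : Fin s => (i : ℕ) < t) := by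
    ext i
    simp only [mem_filter, mem_univ, true_and, mem_insert, Fin.ext_iff]
    omega
  rw [partialProd, this, prod_insert (by simp), mul_comm]
  rfl

lemma partialProd_of_le {t : ℕ} (ht : s ≤ t) : partialProd p α t = ∏ i, p i ^ α i := by
  rw [partialProd, filter_true_of_mem fun i _ => i.isLt.trans_le ht]

variable {p α} (hp : ∀ i, (p i).Prime)
include hp

lemma partialProd_ne_zero (t : ℕ) : partialProd p α t ≠ 0 :=
  prod_ne_zero_iff.mpr fun i _ => pow_ne_zero _ (hp i).ne_zero

lemma exists_eq_of_prime_dvd_partialProd {t ℓ : ℕ} (hℓ : ℓ.Prime) (h : ℓ ∣ partialProd p α t) :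
    ∃ i : Fin s, (i : ℕ) < t ∧ ℓ = p i := by
  obtain ⟨i, hi, hℓi⟩ := (hℓ.prime.dvd_finsetProd_iff _).mp h
  exact ⟨i, (mem_filter.mp hi).2, (Nat.prime_dvd_prime_iff_eq hℓ (hp i)).mp (hℓ.dvd_of_dvd_pow hℓi)⟩

lemma odd_partialProd (hodd : ∀ i, Odd (p i)) (t : ℕ) : Odd (partialProd p α t) := by
  refine Nat.odd_iff.mpr (Nat.two_dvd_ne_zero.mp fun h2 => ?_)
  obtain ⟨i, -, hi⟩ := exists_eq_of_prime_dvd_partialProd hp Nat.prime_two h2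
  exact Nat.not_even_iff_odd.mpr (hodd i) (hi ▸ even_two)

lemma coprime_partialProd (hmono : StrictMono p) {t : ℕ} (ht : t < s) :
    (partialProd p α t).Coprime (p ⟨t, ht⟩ ^ α ⟨t, ht⟩) := by
  refine Nat.Coprime.pow_right _ ((Nat.Prime.coprime_iff_not_dvd (hp _)).mpr fun h => ?_).symm
  obtain ⟨i, hi, hti⟩ := exists_eq_of_prime_dvd_partialProd hp (hp _) h
  exact hi.ne (congrArg Fin.val (hmono.injective hti)).symm

lemma minFac_partialProd (hmono : StrictMono p) (hα : ∀ i, 1 ≤ α i) {t : ℕ} (ht : 0 < t)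
    (hs : 0 < s) : (partialProd p α t).minFac = p ⟨0, hs⟩ := by
  have hdvd : p ⟨0, hs⟩ ∣ partialProd p α t :=
    (dvd_pow_self _ (Nat.one_le_iff_ne_zero.mp (hα _))).trans
      (dvd_prod_of_mem _ (mem_filter.mpr ⟨mem_univ _, ht⟩))
  refine le_antisymm (Nat.minFac_le_of_dvd (hp _).two_le hdvd) ?_
  obtain ⟨i, -, hi⟩ := exists_eq_of_prime_dvd_partialProd hp (Nat.minFac_prime
    fun h => (hp ⟨0, hs⟩).ne_one (Nat.dvd_one.mp (h ▸ hdvd))) (Nat.minFac_dvd _)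
  exact hi ▸ hmono.monotone (Nat.zero_le i)

lemma hasVanishingAutocorrelation_partialProd_of_succ (hodd : ∀ i, Odd (p i))
    (hmono : StrictMono p) (hα : ∀ i, 1 ≤ α i) (hs : 0 < s) {n t : ℕ} (ht : t < s) (ht0 : 0 < t)
    (hbig : 2 ^ n < p ⟨0, hs⟩ + p ⟨t, ht⟩)
    (h : HasVanishingAutocorrelation (Fin n → ZMod 2) (partialProd p α (t + 1))) :
    HasVanishingAutocorrelation (Fin n → ZMod 2) (partialProd p α t) := by
  have : Fact (p ⟨t, ht⟩).Prime := ⟨hp _⟩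
  have hminFac := minFac_partialProd hp hmono hα ht0 hs
  obtain ⟨γ, hγ⟩ := Nat.exists_eq_add_of_le' (hα ⟨t, ht⟩)
  rw [partialProd_succ p α ht, hγ] at h
  refine h.of_mul_prime_pow (fun x => funext fun i => CharTwo.add_self_eq_zero (x i))
    (odd_partialProd hp hodd t) (hodd _) (hγ ▸ coprime_partialProd hp hmono ht) ?_ ?_
  · exact hminFac ▸ hmono.monotone (Nat.zero_le t)
  · simpa [hminFac, Fintype.card_pi] using hbig

end PartialProducts

end GeneralizedBent

open GeneralizedBent in
theorem stmt_11_general (s n r : ℕ) (hs : 0 < s) (hr1 : 1 ≤ r) (hrs : r ≤ s)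
    (p α : Fin s → ℕ) (hp : ∀ i, (p i).Prime) (hodd : ∀ i, Odd (p i))
    (hmono : StrictMono p) (hα : ∀ i, 1 ≤ α i)
    (hbig : ∀ i : Fin s, r ≤ (i : ℕ) → 2 ^ n < p ⟨0, hs⟩ + p i)
    (hno : ¬ ∃ f : (Fin n → ZMod 2) →
        ZMod (∏ i ∈ Finset.univ.filter (fun i : Fin s => (i : ℕ) < r), p i ^ α i),
      IsGBF (∏ i ∈ Finset.univ.filter (fun i : Fin s => (i : ℕ) < r), p i ^ α i) n f) :
    ¬ ∃ f : (Fin n → ZMod 2) → ZMod (∏ i, p i ^ α i),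
      IsGBF (∏ i, p i ^ α i) n f := by
  have (t : ℕ) : NeZero (partialProd p α t) := ⟨partialProd_ne_zero hp t⟩
  rw [← partialProd_of_le p α le_rfl, exists_isGBF_iff]
  intro hf
  refine hno ((exists_isGBF_iff (m := partialProd p α r)).mpr ?_)
  exact Nat.decreasingInduction (motive := fun t _ => r ≤ t →
      HasVanishingAutocorrelation (Fin n → ZMod 2) (partialProd p α t))
    (fun t ht ih hrt => hasVanishingAutocorrelation_partialProd_of_succ hp hodd hmono hα hs ht
      (hr1.trans hrt) (hbig ⟨t, ht⟩ hrt) (ih (hrt.trans t.le_succ)))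
    (fun _ => hf) hrs le_rfl

theorem stmt_11 (s n r : ℕ) (hs : 0 < s) (hn : 1 ≤ n) (hr1 : 1 ≤ r) (hrs : r ≤ s)
    (p α : Fin s → ℕ) (hp : ∀ i, (p i).Prime) (hodd : ∀ i, Odd (p i))
    (hmono : StrictMono p) (hα : ∀ i, 1 ≤ α i)
    (hbig : ∀ i : Fin s, r ≤ (i : ℕ) → 2 ^ n < p ⟨0, hs⟩ + p i)
    (hno : ¬ ∃ f : (Fin n → ZMod 2) →
        ZMod (∏ i ∈ Finset.univ.filter (fun i : Fin s => (i : ℕ) < r), p i ^ α i),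
      IsGBF (∏ i ∈ Finset.univ.filter (fun i : Fin s => (i : ℕ) < r), p i ^ α i) n f) :
    ¬ ∃ f : (Fin n → ZMod 2) → ZMod (∏ i, p i ^ α i),
      IsGBF (∏ i, p i ^ α i) n f :=
  stmt_11_general s n r hs hr1 hrs p α hp hodd hmono hα hbig hno
end

section
/- Let n be an odd positive integer, let p be an odd prime, let α ≥ 1, and let m = 2·p^α. If an (m,n)-generalized bent function exists, then either 8·p < 2^n (i.e., p < 2^{n−3}) or 4·(p+1) = 2^n (i.e., p = 2^{n−2} − 1 is a Mersenne prime). -/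
/-
Put `ω = ζ_{2p^α}` and `q = p^α`. The sum `S_y = ∑ₓ ω^{f x} (-1)^{y·x}` is `P_y(ω)` for an integer
polynomial `P_y`, and `|S_y|² = D_y(ω)` with `D_y = P_y · P_y(X^{2q-1})`. Since `-ω` is a
primitive `q`-th root of unity and `Φ_q(1) = p`, the identity `D_y(ω) = 2^n` gives
`p ∣ D_y(-1) - 2^n = M_y² - 2^n`, where `M_y = P_y(-1)` is the Walsh transform of `(-1)^f`.
By Parseval `∑_y M_y² = 4^n`, and every `M_y` is even.

If `2^n ≤ 8p` and `n = K + 2`, write `M_y = 2 b_y`: the `b_y²` are `≡ 2^K (mod p)` with mean `2^K`.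
As `2^K` is not a square and `2^K ≤ 2p`, some `b_y²` equals `a² = 2^K - p < p`. Then every `|b_y|`
is `p c_y ± a`, and summing `b_y² - a²` gives `p Q + 2 a R = 4 · 2^K` with `Q = ∑ c_y²`,
`|R| ≤ Q` and `Q ≡ R (mod 2)`. Reducing modulo `p` leaves only `a = 1`, i.e. `2^K = p + 1`.
-/

open Polynomial

theorem IsPrimitiveRoot.prime_dvd_eval_one_sub_eval_one {K : Type*} [Field K] [CharZero K]
    {p k : ℕ} [Fact p.Prime] {ζ : K} (hζ : IsPrimitiveRoot ζ (p ^ (k + 1))) {D E : ℤ[X]}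
    (h : aeval ζ D = aeval ζ E) : (p : ℤ) ∣ D.eval 1 - E.eval 1 := by
  have hpos : 0 < p ^ (k + 1) := pow_pos (Fact.out : p.Prime).pos _
  have hdvd : minpoly ℤ ζ ∣ D - E :=
    minpoly.isIntegrallyClosed_dvd (hζ.isIntegral hpos) (by simp [h])
  rw [← cyclotomic_eq_minpoly hζ hpos] at hdvd
  obtain ⟨g, hg⟩ := hdvd
  refine ⟨g.eval 1, ?_⟩
  simpa [eval_one_cyclotomic_prime_pow] using congrArg (eval 1) hg

theorem IsPrimitiveRoot.neg_of_odd {R : Type*} [CommRing R] [IsDomain R] {ω : R} {q : ℕ}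
    (hω : IsPrimitiveRoot ω (2 * q)) (hq : Odd q) : IsPrimitiveRoot (-ω) q := by
  have hωq : ω ^ q = -1 := by
    have hsq : (ω ^ q) ^ 2 = 1 := by rw [← pow_mul, mul_comm, hω.pow_eq_one]
    refine (sq_eq_one_iff.mp hsq).resolve_left fun h1 => ?_
    have := Nat.le_of_dvd hq.pos (hω.dvd_of_pow_eq_one q h1)
    have := hq.pos
    omega
  refine ⟨by rw [hq.neg_pow, hωq, neg_neg], fun l hl => ?_⟩
  have : ω ^ (2 * l) = 1 := by rw [← (even_two_mul l).neg_pow, pow_mul', hl, one_pow]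
  exact Nat.dvd_of_mul_dvd_mul_left two_pos (hω.dvd_of_pow_eq_one _ this)

theorem Complex.normSq_aeval_eq_aeval_mul_comp {ω : ℂ} {m : ℕ} (hω : ω ^ m = 1) (hm : m ≠ 0)
    (P : ℤ[X]) : (normSq (aeval ω P) : ℂ) = aeval ω (P * P.comp (X ^ (m - 1))) := by
  have hconj : (starRingEnd ℂ) ω = ω ^ (m - 1) := by
    rw [← Complex.inv_eq_conj (norm_eq_one_of_pow_eq_one hω hm), eq_comm,
      inv_eq_of_mul_eq_one_left]
    rw [← pow_succ, Nat.sub_add_cancel (Nat.one_le_iff_ne_zero.mpr hm), hω]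
  have hconjP : (starRingEnd ℂ) (aeval ω P) = aeval ((starRingEnd ℂ) ω) P :=
    (aeval_algHom_apply (starRingEnd ℂ).toIntAlgHom ω P).symm
  rw [← Complex.mul_conj, map_mul, aeval_comp, hconjP, hconj]
  simp

theorem IsPrimitiveRoot.prime_dvd_eval_neg_one_sq_sub {p k : ℕ} [Fact p.Prime] (hpodd : Odd p)
    {ω : ℂ} (hω : IsPrimitiveRoot ω (2 * p ^ (k + 1))) (P : ℤ[X]) {N : ℕ}
    (h : ‖aeval ω P‖ ^ 2 = N) : (p : ℤ) ∣ P.eval (-1) ^ 2 - N := by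
  set D := P * P.comp (X ^ (2 * p ^ (k + 1) - 1))
  have hD : aeval ω D = N := by
    rw [← Complex.normSq_aeval_eq_aeval_mul_comp hω.pow_eq_one
      (by have := (Fact.out : p.Prime).pos; positivity), Complex.normSq_eq_norm_sq, h]
    simp
  have hneg : aeval (-ω) (D.comp (-X)) = aeval (-ω) (C (N : ℤ)) := by
    simp [aeval_comp, hD]
  have hodd : Odd (2 * p ^ (k + 1) - 1) := by
    have := (hpodd.pow (n := k + 1)).pos
    exact Nat.Even.sub_odd (by omega) (even_two_mul _) odd_one
  simpa [D, hodd.neg_one_pow, sq] using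
    (hω.neg_of_odd hpodd.pow).prime_dvd_eval_one_sub_eval_one hneg

def walshChar {n : ℕ} (y x : Fin n → ZMod 2) : ℤ := (-1) ^ ∑ i, (y i).val * (x i).val

theorem sum_walshChar_mul_walshChar {n : ℕ} (x x' : Fin n → ZMod 2) :
    ∑ y, walshChar y x * walshChar y x' = if x = x' then 2 ^ n else 0 := by
  have hfactor : ∀ u v : ZMod 2,
      ∑ b : ZMod 2, (-1 : ℤ) ^ (b.val * u.val) * (-1) ^ (b.val * v.val) =
        if u = v then 2 else 0 := by decide
  simp only [walshChar, ← Finset.prod_pow_eq_pow_sum, ← Finset.prod_mul_distrib]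
  refine (Fintype.prod_sum fun i (b : ZMod 2) =>
    (-1 : ℤ) ^ (b.val * (x i).val) * (-1) ^ (b.val * (x' i).val)).symm.trans ?_
  simp only [hfactor, Fintype.prod_ite_zero, funext_iff, Finset.prod_const, Finset.card_univ,
    Fintype.card_fin]

theorem sum_sq_sum_mul_walshChar {n : ℕ} (g : (Fin n → ZMod 2) → ℤ) :
    ∑ y, (∑ x, g x * walshChar y x) ^ 2 = 2 ^ n * ∑ x, g x ^ 2 := by
  calc ∑ y, (∑ x, g x * walshChar y x) ^ 2
      = ∑ x, ∑ x', g x * g x' * ∑ y, walshChar y x * walshChar y x' := by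
        simp only [sq, Finset.sum_mul_sum]
        rw [Finset.sum_comm]
        refine Finset.sum_congr rfl fun x _ => ?_
        rw [Finset.sum_comm]
        refine Finset.sum_congr rfl fun x' _ => ?_
        rw [Finset.mul_sum]
        exact Finset.sum_congr rfl fun y _ => by ring
    _ = 2 ^ n * ∑ x, g x ^ 2 := by
        simp [sum_walshChar_mul_walshChar, Finset.mul_sum, sq, mul_comm]

theorem Fintype.even_sum_of_odd {ι : Type*} [Fintype ι] {g : ι → ℤ} (hg : ∀ x, Odd (g x))
    (hcard : Even (Fintype.card ι)) : Even (∑ x, g x) := by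
  have h : ∑ x, g x = ∑ x, (g x - 1) + Fintype.card ι := by simp
  rw [h]
  exact (Finset.even_sum _ fun x _ => (hg x).sub_odd odd_one).add (by exact_mod_cast hcard)

theorem Int.sq_ne_two_pow_of_odd {K : ℕ} (hK : Odd K) (b : ℤ) : b ^ 2 ≠ 2 ^ K := by
  intro h
  have hnat : b.natAbs ^ 2 = 2 ^ K := by
    simpa [Int.natAbs_pow] using congrArg Int.natAbs h
  obtain ⟨i, -, hi⟩ := (Nat.dvd_prime_pow Nat.prime_two).1 (hnat ▸ dvd_pow_self _ two_ne_zero)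
  rw [hi, ← pow_mul] at hnat
  have := Nat.pow_right_injective le_rfl hnat
  obtain ⟨j, rfl⟩ := hK
  omega

theorem Nat.Prime.not_dvd_two_pow {p : ℕ} (hp : p.Prime) (hpodd : Odd p) (K : ℕ) :
    ¬ (p : ℤ) ∣ 2 ^ K := by
  intro h
  have h' : p ∣ 2 ^ K := Int.natCast_dvd_natCast.mp (by exact_mod_cast h)
  exact hp.one_lt.ne' (((Nat.coprime_two_right.mpr hpodd).pow_right K).eq_one_of_dvd h')

theorem exists_sq_add_prime_eq_two_pow {ι : Type*} [Fintype ι] [Nonempty ι] {p K : ℕ}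
    (hp : p.Prime) (hpodd : Odd p) (hK : Odd K) (hle : 2 ^ K ≤ 2 * p) (b : ι → ℤ)
    (hdvd : ∀ y, (p : ℤ) ∣ b y ^ 2 - 2 ^ K) (hsum : ∑ y, b y ^ 2 ≤ Fintype.card ι * 2 ^ K) :
    ∃ a : ℤ, 0 ≤ a ∧ a ^ 2 < p ∧ a ^ 2 + p = 2 ^ K := by
  have hle' : (2 : ℤ) ^ K ≤ 2 * p := by exact_mod_cast hle
  have hp0 : (0 : ℤ) < p := by exact_mod_cast hp.pos
  obtain ⟨y, -, hy⟩ := Finset.exists_le_of_sum_le Finset.univ_nonempty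
    (hsum.trans_eq (by simp) : ∑ y, b y ^ 2 ≤ ∑ _y : ι, (2 : ℤ) ^ K)
  obtain ⟨t, ht⟩ := hdvd y
  have ht0 : t ≠ 0 := by
    rintro rfl
    exact Int.sq_ne_two_pow_of_odd hK (b y) (by linarith)
  have ht1 : t = -1 := by
    by_contra hne
    have ht2 : t ≤ -2 := by
      have : p * t ≤ 0 := by linarith
      have : t ≤ 0 := by nlinarith
      omega
    have hb0 : b y ^ 2 = 0 := le_antisymm (by nlinarith) (sq_nonneg _)
    exact hp.not_dvd_two_pow hpodd K ⟨-t, by linarith⟩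
  subst ht1
  refine ⟨|b y|, abs_nonneg _, ?_, by rw [sq_abs]; linarith⟩
  refine lt_of_le_of_ne (by rw [sq_abs]; linarith) fun h => ?_
  exact (Nat.prime_iff_prime_int.mp hp).not_isSquare ⟨|b y|, by rw [← h, sq]⟩

theorem exists_eq_mul_add_sign_mul {p : ℕ} (hp : p.Prime) {a x : ℤ} (ha : 0 ≤ a) (hap : a < p)
    (hx : 0 ≤ x) (h : (p : ℤ) ∣ x ^ 2 - a ^ 2) :
    ∃ c ε : ℤ, 0 ≤ c ∧ (ε = 1 ∨ ε = -1) ∧ x = p * c + ε * a := by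
  have hp0 : (0 : ℤ) < p := by exact_mod_cast hp.pos
  rw [sq_sub_sq] at h
  rcases (Nat.prime_iff_prime_int.mp hp).dvd_or_dvd h with ⟨c, hc⟩ | ⟨c, hc⟩
  · refine ⟨c, -1, ?_, Or.inr rfl, by linarith⟩
    nlinarith
  · refine ⟨c, 1, ?_, Or.inl rfl, by linarith⟩
    nlinarith

theorem Int.odd_of_sq_add_prime_eq_two_pow {p K : ℕ} (hp : p.Prime) (hpodd : Odd p) {a : ℤ}
    (haK : a ^ 2 + p = 2 ^ K) : Odd a := by
  have hK : K ≠ 0 := by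
    rintro rfl
    have := hp.two_le
    nlinarith
  have : ¬ Even (a ^ 2) := by
    rw [show a ^ 2 = 2 ^ K - p by linarith]
    simp [Int.even_sub, Int.even_pow, hK, hpodd]
  exact Int.not_even_iff_odd.mp fun he => this (he.pow_of_ne_zero two_ne_zero)

theorem eq_one_of_prime_mul_add_two_mul_eq {p K : ℕ} (hp : p.Prime) (hpodd : Odd p)
    {a Q R : ℤ} (ha : 0 ≤ a) (hap : a ^ 2 < p) (haK : a ^ 2 + p = 2 ^ K) (hRQ : |R| ≤ Q)
    (hQR : Even (Q - R)) (h : p * Q + 2 * a * R = 4 * 2 ^ K) : a = 1 := by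
  have hp0 : (0 : ℤ) < p := by exact_mod_cast hp.pos
  obtain ⟨m, hm⟩ := Int.odd_of_sq_add_prime_eq_two_pow hp hpodd haK
  obtain ⟨r, hr⟩ : Odd (p : ℤ) := by exact_mod_cast hpodd
  have ha1 : 1 ≤ a := by omega
  have h2a : 2 * a < p := by
    have : 2 * a ≤ p := by nlinarith [sq_nonneg (a - 1)]
    omega
  obtain ⟨s, hs⟩ : (p : ℤ) ∣ 2 * a - R := by
    have hdvd : (p : ℤ) ∣ 2 * a * (2 * a - R) := ⟨Q - 4, by linear_combination -h + 4 * haK⟩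
    refine ((Nat.prime_iff_prime_int.mp hp).dvd_or_dvd hdvd).resolve_left fun h' => ?_
    have := Int.le_of_dvd (by omega) h'
    omega
  have hQ : Q = 4 + 2 * a * s := by
    have : (p : ℤ) * (Q - 4 - 2 * a * s) = 0 := by
      linear_combination h - 4 * haK + 2 * a * hs
    linarith [(mul_eq_zero.mp this).resolve_left hp0.ne']
  obtain ⟨hRQ1, hRQ2⟩ := abs_le.mp hRQ
  rcases lt_trichotomy s 0 with hs0 | rfl | hs0
  · have : (p : ℤ) * s ≤ -p := by nlinarith
    have : a * s ≤ -a := by nlinarith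
    linarith
  · omega
  · have hs2 : 2 ≤ s := by
      have hps : Even ((p : ℤ) * s) := by
        have := hQR.add (even_two_mul (a - a * s - 2))
        rwa [show Q - R + 2 * (a - a * s - 2) = p * s by linear_combination hQ + hs] at this
      obtain ⟨u, hu⟩ := (Int.even_mul.mp hps).resolve_left (Int.not_even_iff_odd.mpr ⟨r, hr⟩)
      omega
    have hp3a : (p : ℤ) ≤ 3 * a + 2 := by nlinarith
    have ha3 : a = 1 ∨ a = 3 := by
      have : a ≤ 3 := by nlinarith
      omega
    refine ha3.resolve_right fun ha3 => ?_
    subst ha3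
    have h18 : 18 < (2 : ℤ) ^ K := by linarith
    have h20 : (2 : ℤ) ^ K ≤ 20 := by linarith
    rcases le_or_gt K 4 with hK4 | hK5
    · have := pow_le_pow_right₀ (by norm_num : (1 : ℤ) ≤ 2) hK4
      linarith
    · have := pow_le_pow_right₀ (by norm_num : (1 : ℤ) ≤ 2) hK5
      linarith

theorem two_pow_eq_prime_add_one_of_sum_sq {ι : Type*} [Fintype ι] {p K : ℕ} (hp : p.Prime)
    (hpodd : Odd p) (hK : Odd K) (hle : 2 ^ K ≤ 2 * p) (b : ι → ℤ)
    (hcard : Fintype.card ι = 4 * 2 ^ K) (hdvd : ∀ y, (p : ℤ) ∣ b y ^ 2 - 2 ^ K)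
    (hsum : ∑ y, b y ^ 2 = 4 * 2 ^ K * 2 ^ K) : 2 ^ K = p + 1 := by
  have hp0 : (0 : ℤ) < p := by exact_mod_cast hp.pos
  have hcardZ : (Fintype.card ι : ℤ) = 4 * 2 ^ K := by rw [hcard]; push_cast; ring
  have : Nonempty ι := Fintype.card_pos_iff.mp (by rw [hcard]; positivity)
  obtain ⟨a, ha0, hap, haK⟩ :=
    exists_sq_add_prime_eq_two_pow hp hpodd hK hle b hdvd (by rw [hsum, hcardZ])
  have hdecomp (y : ι) : ∃ c ε : ℤ, 0 ≤ c ∧ (ε = 1 ∨ ε = -1) ∧ |b y| = p * c + ε * a := by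
    refine exists_eq_mul_add_sign_mul hp ha0 (by nlinarith) (abs_nonneg _) ?_
    rw [sq_abs, show b y ^ 2 - a ^ 2 = b y ^ 2 - 2 ^ K + p by linarith]
    exact (hdvd y).add dvd_rfl
  choose c ε hc hε hb using hdecomp
  have hterm (y : ι) : b y ^ 2 - a ^ 2 = p * (p * c y ^ 2 + 2 * a * (ε y * c y)) := by
    rw [← sq_abs, hb]
    rcases hε y with h | h <;> rw [h] <;> ring
  have hQR : (p : ℤ) * ∑ y, c y ^ 2 + 2 * a * ∑ y, ε y * c y = 4 * 2 ^ K := by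
    refine mul_left_cancel₀ hp0.ne' ?_
    calc (p : ℤ) * (p * ∑ y, c y ^ 2 + 2 * a * ∑ y, ε y * c y)
        = ∑ y, (b y ^ 2 - a ^ 2) := by
          simp only [hterm, Finset.mul_sum, ← Finset.sum_add_distrib]
      _ = p * (4 * 2 ^ K) := by
          rw [Finset.sum_sub_distrib, hsum, Finset.sum_const, Finset.card_univ, nsmul_eq_mul,
            hcardZ]
          linear_combination -(4 * 2 ^ K) * haK
  have hRQ : |∑ y, ε y * c y| ≤ ∑ y, c y ^ 2 := by
    refine (Finset.abs_sum_le_sum_abs _ _).trans (Finset.sum_le_sum fun y _ => ?_)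
    rcases hε y with h | h <;> simp [h, abs_of_nonneg (hc y), Int.le_self_sq]
  have hQR_even : Even (∑ y, c y ^ 2 - ∑ y, ε y * c y) := by
    rw [← Finset.sum_sub_distrib]
    refine Finset.even_sum _ fun y _ => ?_
    rcases hε y with h | h
    · simpa [h, sq, ← mul_sub_one] using Int.even_mul_pred_self (c y)
    · simpa [h, sq, ← mul_add_one] using Int.even_mul_succ_self (c y)
  have ha1 := eq_one_of_prime_mul_add_two_mul_eq hp hpodd ha0 hap haK hRQ hQR_even hQR
  have : (2 : ℤ) ^ K = p + 1 := by rw [← haK, ha1]; ring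
  exact_mod_cast this

theorem four_mul_prime_add_one_eq_two_pow {ι : Type*} [Fintype ι] {p n : ℕ} (hp : p.Prime)
    (hpodd : Odd p) (hn : Odd n) (hle : 2 ^ n ≤ 8 * p) (M : ι → ℤ)
    (hcard : Fintype.card ι = 2 ^ n) (heven : ∀ y, 2 ∣ M y)
    (hdvd : ∀ y, (p : ℤ) ∣ M y ^ 2 - 2 ^ n) (hsum : ∑ y, M y ^ 2 = 2 ^ n * 2 ^ n) :
    4 * (p + 1) = 2 ^ n := by
  choose b hb using heven
  rcases Nat.lt_or_ge n 2 with hn2 | hn2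
  · obtain rfl : n = 1 := by obtain ⟨k, rfl⟩ := hn; omega
    have : Nonempty ι := Fintype.card_pos_iff.mp (by rw [hcard]; positivity)
    obtain ⟨y, -, hy⟩ := Finset.exists_le_of_sum_le Finset.univ_nonempty
      (hsum.trans_le (by simp [hcard]) : ∑ y, M y ^ 2 ≤ ∑ _y : ι, (2 : ℤ) ^ 1)
    have hb0 : b y = 0 := by nlinarith [hb y]
    exact absurd (by simpa [hb y, hb0] using hdvd y) (hp.not_dvd_two_pow hpodd 1)
  obtain ⟨K, rfl⟩ : ∃ K, n = K + 2 := ⟨n - 2, by omega⟩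
  have hK : Odd K := by simpa [Nat.odd_add] using hn
  have hpow : (2 : ℤ) ^ (K + 2) = 4 * 2 ^ K := by ring
  have hK' := two_pow_eq_prime_add_one_of_sum_sq hp hpodd hK (by rw [pow_add] at hle; omega) b
    (by rw [hcard, pow_add]; ring) (fun y => ?_) ?_
  · rw [pow_add, hK']; ring
  · have h4 : (p : ℤ) ∣ 2 ^ 2 * (b y ^ 2 - 2 ^ K) := by
      rw [show (2 : ℤ) ^ 2 * (b y ^ 2 - 2 ^ K) = M y ^ 2 - 2 ^ (K + 2) by rw [hb y]; ring]
      exact hdvd y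
    exact ((Nat.prime_iff_prime_int.mp hp).dvd_or_dvd h4).resolve_left
      (hp.not_dvd_two_pow hpodd 2)
  · have hM : ∑ y, M y ^ 2 = 4 * ∑ y, b y ^ 2 := by
      rw [Finset.mul_sum]
      exact Finset.sum_congr rfl fun y _ => by rw [hb y]; ring
    rw [hM, hpow] at hsum
    linarith

theorem stmt_12_general (n p α : ℕ) (hnodd : Odd n)
    (hp : p.Prime) (hpodd : Odd p) (hα : 1 ≤ α)
    (f : (Fin n → ZMod 2) → ZMod (2 * p ^ α)) (hf : IsGBF (2 * p ^ α) n f) :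
    8 * p < 2 ^ n ∨ 4 * (p + 1) = 2 ^ n := by
  obtain ⟨k, rfl⟩ : ∃ k, α = k + 1 := ⟨α - 1, by omega⟩
  have : Fact p.Prime := ⟨hp⟩
  have hω : IsPrimitiveRoot (zetaC (2 * p ^ (k + 1))) (2 * p ^ (k + 1)) :=
    Complex.isPrimitiveRoot_exp _ (by have := hp.pos; positivity)
  set M : (Fin n → ZMod 2) → ℤ := fun y => ∑ x, (-1) ^ (f x).val * walshChar y x
  have hdvd (y : Fin n → ZMod 2) : (p : ℤ) ∣ M y ^ 2 - 2 ^ n := by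
    have := hω.prime_dvd_eval_neg_one_sq_sub hpodd
      (∑ x, C (walshChar y x) * X ^ (f x).val) (N := 2 ^ n) (by
        simpa [walshChar, mul_comm] using hf y)
    simpa [M, eval_finsetSum, mul_comm] using this
  have heven (y : Fin n → ZMod 2) : 2 ∣ M y :=
    (Fintype.even_sum_of_odd (fun x => (odd_neg_one.pow).mul odd_neg_one.pow)
      (by simp [Nat.even_pow, hnodd.pos.ne'])).two_dvd
  have hsum : ∑ y, M y ^ 2 = 2 ^ n * 2 ^ n := by
    simp [M, sum_sq_sum_mul_walshChar, ← pow_mul, pow_mul']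
  rcases lt_or_ge (8 * p) (2 ^ n) with hlt | hge
  · exact Or.inl hlt
  · exact Or.inr
      (four_mul_prime_add_one_eq_two_pow hp hpodd hnodd hge M (by simp) heven hdvd hsum)

theorem stmt_12 (n p α : ℕ) (hn : 0 < n) (hnodd : Odd n)
    (hp : p.Prime) (hpodd : Odd p) (hα : 1 ≤ α)
    (f : (Fin n → ZMod 2) → ZMod (2 * p ^ α)) (hf : IsGBF (2 * p ^ α) n f) :
    8 * p < 2 ^ n ∨ 4 * (p + 1) = 2 ^ n :=
  stmt_12_general n p α hnodd hp hpodd hα f hf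
end
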